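/- Let Λ be a row-finite locally convex k-graph and Λ̃ its desourcification. The map ι : Λ → Λ̃ given by ι(λ) = [λx; (0, d(λ))] for any x ∈ s(λ)Λ^{≤∞} is a well-defined injective degree-preserving functor (so Λ is isomorphic to ι(Λ)). Moreover, the map π : Λ̃ → ι(Λ) given by π([x; (m, n)]) = [x; (m∧d(x), n∧d(x))] is a well-defined surjective k-graph morphism satisfying π∘π = π and π∘ι = ι. -/

import Mathlib

open scoped ENat

/-! ## `k`-graphs -/

/-- The `i`-th standard generator of `ℕᵏ`. -/
def unitVec {k : ℕ} (i : Fin k) : Fin k → ℕ := fun j => if j = i then 1 else 0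

/-- A higher-rank graph (`k`-graph): a countable category together with a degree
functor `d : Λ → ℕᵏ` satisfying the unique factorization property.  Morphisms are
composed in the "path" order: `comp f g` is defined when `src f = rng g`. -/
structure KGraph (k : ℕ) : Type 1 where
  Obj : Type
  Mor : Type
  mor_countable : Countable Mor
  src : Mor → Obj
  rng : Mor → Obj
  comp : ∀ f g : Mor, src f = rng g → Mor
  id : Obj → Mor
  deg : Mor → Fin k → ℕ
  src_id : ∀ v, src (id v) = v
  rng_id : ∀ v, rng (id v) = v
  deg_id : ∀ v, deg (id v) = 0
  src_comp : ∀ f g h, src (comp f g h) = src g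
  rng_comp : ∀ f g h, rng (comp f g h) = rng f
  deg_comp : ∀ f g h, deg (comp f g h) = deg f + deg g
  id_comp : ∀ f, comp (id (rng f)) f (src_id (rng f)) = f
  comp_id : ∀ f, comp f (id (src f)) ((rng_id (src f)).symm) = f
  comp_assoc : ∀ f g h (hfg : src f = rng g) (hgh : src g = rng h),
    comp (comp f g hfg) h ((src_comp f g hfg).trans hgh) =
      comp f (comp g h hgh) (hfg.trans (rng_comp g h hgh).symm)
  factorization : ∀ (f : Mor) (m n : Fin k → ℕ), deg f = m + n →
    ∃! p : Mor × Mor, ∃ h : src p.1 = rng p.2,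
      deg p.1 = m ∧ deg p.2 = n ∧ comp p.1 p.2 h = f

namespace KGraph

variable {k : ℕ}

/-- `Λ` is row-finite if every `vΛⁿ` is finite. -/
def RowFinite (Λ : KGraph k) : Prop :=
  ∀ (v : Λ.Obj) (n : Fin k → ℕ), {f : Λ.Mor | Λ.rng f = v ∧ Λ.deg f = n}.Finite

/-- `Λ` has no sources if every `vΛⁿ` is nonempty. -/
def NoSources (Λ : KGraph k) : Prop :=
  ∀ (v : Λ.Obj) (n : Fin k → ℕ), ∃ f : Λ.Mor, Λ.rng f = v ∧ Λ.deg f = n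

/-- `Λ` is locally convex. -/
def LocallyConvex (Λ : KGraph k) : Prop :=
  ∀ (v : Λ.Obj) (i j : Fin k), i ≠ j →
    ∀ f g : Λ.Mor, Λ.rng f = v → Λ.deg f = unitVec i → Λ.rng g = v → Λ.deg g = unitVec j →
      (∃ f' : Λ.Mor, Λ.rng f' = Λ.src f ∧ Λ.deg f' = unitVec j) ∧
      (∃ g' : Λ.Mor, Λ.rng g' = Λ.src g ∧ Λ.deg g' = unitVec i)

/-- The set `Λ^{≤ n}`. -/
def LeSet (Λ : KGraph k) (n : Fin k → ℕ) : Set Λ.Mor :=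
  {f | Λ.deg f ≤ n ∧ ∀ i : Fin k, Λ.deg f + unitVec i ≤ n →
    ¬∃ g : Λ.Mor, Λ.rng g = Λ.src f ∧ Λ.deg g = unitVec i}

/-- Condition (MT3): any two vertices can be connected to a common vertex. -/
def MT3 (Λ : KGraph k) : Prop :=
  ∀ v₁ v₂ : Λ.Obj, ∃ w : Λ.Obj,
    (∃ f : Λ.Mor, Λ.rng f = v₁ ∧ Λ.src f = w) ∧ (∃ f : Λ.Mor, Λ.rng f = v₂ ∧ Λ.src f = w)

/-- A hereditary set of vertices. -/
def Hereditary (Λ : KGraph k) (H : Set Λ.Obj) : Prop :=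
  ∀ v w : Λ.Obj, v ∈ H → (∃ f : Λ.Mor, Λ.rng f = v ∧ Λ.src f = w) → w ∈ H

/-- A saturated set of vertices. -/
def Saturated (Λ : KGraph k) (H : Set Λ.Obj) : Prop :=
  ∀ (v : Λ.Obj) (i : Fin k),
    (∀ f ∈ Λ.LeSet (unitVec i), Λ.rng f = v → Λ.src f ∈ H) → v ∈ H

/-- A maximal tail: a nonempty vertex set satisfying (MT1), (MT2) and (MT3). -/
def MaximalTail (Λ : KGraph k) (M : Set Λ.Obj) : Prop :=
  M.Nonempty ∧
  (∀ v w : Λ.Obj, w ∈ M → (∃ f : Λ.Mor, Λ.rng f = v ∧ Λ.src f = w) → v ∈ M) ∧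
  (∀ v ∈ M, ∀ i : Fin k, ∃ f ∈ Λ.LeSet (unitVec i), Λ.rng f = v ∧ Λ.src f ∈ M) ∧
  (∀ v₁ ∈ M, ∀ v₂ ∈ M, ∃ w ∈ M,
    (∃ f : Λ.Mor, Λ.rng f = v₁ ∧ Λ.src f = w) ∧ (∃ f : Λ.Mor, Λ.rng f = v₂ ∧ Λ.src f = w))

/-- The quotient graph `Λ ∖ H` for a hereditary `H`: vertices `Λ⁰ ∖ H` and
morphisms those of `Λ` with source outside `H`. -/
def minus (Λ : KGraph k) (H : Set Λ.Obj) (hH : Λ.Hereditary H) : KGraph k where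
  Obj := {v : Λ.Obj // v ∉ H}
  Mor := {f : Λ.Mor // Λ.src f ∉ H}
  mor_countable := by haveI := Λ.mor_countable; exact inferInstance
  src f := ⟨Λ.src f.1, f.2⟩
  rng f := ⟨Λ.rng f.1, fun hm => f.2 (hH _ _ hm ⟨f.1, rfl, rfl⟩)⟩
  comp f g h := ⟨Λ.comp f.1 g.1 (congrArg Subtype.val h), by
    rw [Λ.src_comp]; exact g.2⟩
  id v := ⟨Λ.id v.1, by rw [Λ.src_id]; exact v.2⟩
  deg f := Λ.deg f.1
  src_id v := Subtype.ext (Λ.src_id v.1)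
  rng_id v := Subtype.ext (Λ.rng_id v.1)
  deg_id v := Λ.deg_id v.1
  src_comp f g h := Subtype.ext (Λ.src_comp f.1 g.1 _)
  rng_comp f g h := Subtype.ext (Λ.rng_comp f.1 g.1 _)
  deg_comp f g h := Λ.deg_comp f.1 g.1 _
  id_comp f := Subtype.ext (Λ.id_comp f.1)
  comp_id f := Subtype.ext (Λ.comp_id f.1)
  comp_assoc f g h hfg hgh := Subtype.ext (Λ.comp_assoc f.1 g.1 h.1 _ _)
  factorization := by
    rintro ⟨f, hf⟩ m n hdeg
    obtain ⟨⟨p₁, p₂⟩, ⟨h, hm, hn, hcomp⟩, huniq⟩ := Λ.factorization f m n hdeg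
    have hp₂ : Λ.src p₂ ∉ H := by
      have hs : Λ.src (Λ.comp p₁ p₂ h) = Λ.src p₂ := Λ.src_comp _ _ _
      rw [hcomp] at hs
      rw [← hs]; exact hf
    have hp₁ : Λ.src p₁ ∉ H := fun hmem => hp₂ (hH _ _ (h ▸ hmem) ⟨p₂, rfl, rfl⟩)
    refine ⟨(⟨p₁, hp₁⟩, ⟨p₂, hp₂⟩), ⟨Subtype.ext h, hm, hn, Subtype.ext hcomp⟩, ?_⟩
    rintro ⟨⟨q₁, hq₁⟩, ⟨q₂, hq₂⟩⟩ ⟨h', hm', hn', hcomp'⟩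
    have hq := huniq (q₁, q₂)
      ⟨congrArg Subtype.val h', hm', hn', congrArg Subtype.val hcomp'⟩
    rw [Prod.ext_iff]
    exact ⟨Subtype.ext (congrArg Prod.fst hq), Subtype.ext (congrArg Prod.snd hq)⟩

/-! ## Boundary paths -/

/-- `minDeg m d = m ∧ d`, the pointwise minimum of `m ∈ ℕᵏ` and a degree `d ∈ (ℕ∪{∞})ᵏ`,
viewed in `ℕᵏ`. -/
noncomputable def minDeg {k : ℕ} (m : Fin k → ℕ) (d : Fin k → ℕ∞) : Fin k → ℕ :=
  fun i => (min (m i : ℕ∞) (d i)).toNat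

lemma minDeg_ne_top {k : ℕ} (m : Fin k → ℕ) (d : Fin k → ℕ∞) (i : Fin k) :
    min (m i : ℕ∞) (d i) ≠ ⊤ := by
  intro h
  exact ENat.coe_ne_top (m i) (top_le_iff.mp (h ▸ min_le_left (m i : ℕ∞) (d i)))

lemma minDeg_le_deg {k : ℕ} (m : Fin k → ℕ) (d : Fin k → ℕ∞) (i : Fin k) :
    ((minDeg m d i : ℕ∞)) ≤ d i := by
  have h := ENat.coe_toNat (minDeg_ne_top m d i)
  calc ((minDeg m d i : ℕ∞)) = min (m i : ℕ∞) (d i) := h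
    _ ≤ d i := min_le_right _ _

lemma minDeg_mono {k : ℕ} {m n : Fin k → ℕ} (h : m ≤ n) (d : Fin k → ℕ∞) :
    minDeg m d ≤ minDeg n d := by
  intro i
  exact ENat.toNat_le_toNat (min_le_min (by exact_mod_cast h i) le_rfl) (minDeg_ne_top n d i)

/-- A boundary path in `Λ`: a degree-preserving functor `x : Ω_{k,m} → Λ`
(for `m = bdeg ∈ (ℕ ∪ {∞})ᵏ`) such that `p ≤ m` and `p i = m i` imply
`x(p)Λ^{eᵢ} = ∅`. -/
structure BPath {k : ℕ} (Λ : KGraph k) : Type where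
  bdeg : Fin k → ℕ∞
  mor : ∀ p q : Fin k → ℕ, p ≤ q → (∀ i, ((q i : ℕ∞)) ≤ bdeg i) → Λ.Mor
  deg_mor : ∀ p q hpq hq, Λ.deg (mor p q hpq hq) = q - p
  mor_self : ∀ p hp, mor p p le_rfl hp = Λ.id (Λ.rng (mor p p le_rfl hp))
  src_mor : ∀ p q hpq hq, Λ.src (mor p q hpq hq) = Λ.rng (mor q q le_rfl hq)
  rng_mor : ∀ p q hpq (hq : ∀ i, ((q i : ℕ∞)) ≤ bdeg i) (hp : ∀ i, ((p i : ℕ∞)) ≤ bdeg i),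
    Λ.rng (mor p q hpq hq) = Λ.rng (mor p p le_rfl hp)
  comp_mor : ∀ p q r (hpq : p ≤ q) (hqr : q ≤ r) (hr : ∀ i, ((r i : ℕ∞)) ≤ bdeg i)
      (hq : ∀ i, ((q i : ℕ∞)) ≤ bdeg i),
    Λ.comp (mor p q hpq hq) (mor q r hqr hr)
        ((src_mor p q hpq hq).trans (rng_mor q r hqr hr hq).symm) =
      mor p r (hpq.trans hqr) hr
  boundary : ∀ (p : Fin k → ℕ) (hp : ∀ i, ((p i : ℕ∞)) ≤ bdeg i) (i : Fin k),
    ((p i : ℕ∞)) = bdeg i →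
      ¬∃ g : Λ.Mor, Λ.rng g = Λ.rng (mor p p le_rfl hp) ∧ Λ.deg g = unitVec i

namespace BPath

variable {Λ : KGraph k}

/-- The vertex `x(m ∧ d(x))` of a boundary path `x`. -/
noncomputable def vtx (x : BPath Λ) (m : Fin k → ℕ) : Λ.Obj :=
  Λ.rng (x.mor (minDeg m x.bdeg) (minDeg m x.bdeg) le_rfl (fun i => minDeg_le_deg m x.bdeg i))

/-- The range `x(0)` of a boundary path. -/
noncomputable def range (x : BPath Λ) : Λ.Obj := x.vtx 0

/-- The segment `x(m ∧ d(x), n ∧ d(x))` of a boundary path. -/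
noncomputable def seg (x : BPath Λ) (m n : Fin k → ℕ) (h : m ≤ n) : Λ.Mor :=
  x.mor (minDeg m x.bdeg) (minDeg n x.bdeg) (minDeg_mono h x.bdeg)
    (fun i => minDeg_le_deg n x.bdeg i)

/-- `σᵃ(x) = σᵇ(x)`: the two shifted boundary paths coincide. -/
def shiftsEq (x : BPath Λ) (a b : Fin k → ℕ) : Prop :=
  (∀ i, x.bdeg i - (a i : ℕ∞) = x.bdeg i - (b i : ℕ∞)) ∧
  ∀ (p q : Fin k → ℕ) (hpq : p ≤ q)
    (hqa : ∀ i, (((q + a) i : ℕ∞)) ≤ x.bdeg i) (hqb : ∀ i, (((q + b) i : ℕ∞)) ≤ x.bdeg i),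
    x.mor (p + a) (q + a) (add_le_add_left hpq a) hqa =
      x.mor (p + b) (q + b) (add_le_add_left hpq b) hqb

end BPath

/-- `Λ` is aperiodic. -/
def Aperiodic (Λ : KGraph k) : Prop :=
  ∀ (v : Λ.Obj) (m n : Fin k → ℕ), m ≠ n →
    ∃ x : BPath Λ, x.range = v ∧
      ((fun i => m i - minDeg m x.bdeg i) ≠ (fun i => n i - minDeg n x.bdeg i) ∨
        ¬ x.shiftsEq (minDeg m x.bdeg) (minDeg n x.bdeg))

/-- `Λ` is strongly aperiodic: every quotient graph is aperiodic. -/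
def StronglyAperiodic (Λ : KGraph k) : Prop :=
  ∀ (H : Set Λ.Obj) (hH : Λ.Hereditary H), Λ.Saturated H → Aperiodic (Λ.minus H hH)

end KGraph

open scoped Classical

namespace KGraph

/-! ## Kumjian–Pask families and algebras -/

/-- A Kumjian–Pask `Λ`-family `(P, S, S')` in a (possibly nonunital) `R`-algebra `A`.
Here `S` is extended to vertices by `S (id v) = P v` (and similarly for the ghost
elements `S'`), which encodes the usual convention `s_v := p_v`. -/
structure KPFamily {k : ℕ} (Λ : KGraph k) (R : Type) [CommRing R] (A : Type)
    [NonUnitalRing A] [Module R A] [SMulCommClass R A A] [IsScalarTower R A A] where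
  P : Λ.Obj → A
  S : Λ.Mor → A
  S' : Λ.Mor → A
  S_id : ∀ v, S (Λ.id v) = P v
  S'_id : ∀ v, S' (Λ.id v) = P v
  P_mul_self : ∀ v, P v * P v = P v
  P_orthogonal : ∀ v w, v ≠ w → P v * P w = 0
  S_comp : ∀ f g (h : Λ.src f = Λ.rng g), S f * S g = S (Λ.comp f g h)
  S'_comp : ∀ f g (h : Λ.src f = Λ.rng g), S' g * S' f = S' (Λ.comp f g h)
  P_S : ∀ f, P (Λ.rng f) * S f = S f
  S_P : ∀ f, S f * P (Λ.src f) = S f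
  P_S' : ∀ f, P (Λ.src f) * S' f = S' f
  S'_P : ∀ f, S' f * P (Λ.rng f) = S' f
  KP3 : ∀ (n : Fin k → ℕ), n ≠ 0 → ∀ f ∈ Λ.LeSet n, ∀ g ∈ Λ.LeSet n,
    S' f * S g = if f = g then P (Λ.src f) else 0
  KP4 : ∀ (v : Λ.Obj) (n : Fin k → ℕ), n ≠ 0 →
    P v = ∑ᶠ f ∈ {g : Λ.Mor | g ∈ Λ.LeSet n ∧ Λ.rng g = v}, S f * S' f

/-- `A` (a possibly nonunital `R`-algebra) is *the* Kumjian–Pask algebra of `Λ`: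
it carries a Kumjian–Pask family which spans it and is universal among
Kumjian–Pask families. -/
structure IsKPAlgebra {k : ℕ} (Λ : KGraph k) (R : Type) [CommRing R] (A : Type)
    [NonUnitalRing A] [Module R A] [SMulCommClass R A A] [IsScalarTower R A A] :
    Type 1 where
  fam : KPFamily Λ R A
  spanning : ∀ a : A, a ∈ Submodule.span R
    {x : A | ∃ f g : Λ.Mor, Λ.src f = Λ.src g ∧ x = fam.S f * fam.S' g}
  universal : ∀ (B : Type) [NonUnitalRing B] [Module R B] [SMulCommClass R B B]
      [IsScalarTower R B B] (F : KPFamily Λ R B),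
      ∃ φ : A →ₙₐ[R] B, (∀ v, φ (fam.P v) = F.P v) ∧
        (∀ f, φ (fam.S f) = F.S f) ∧ (∀ f, φ (fam.S' f) = F.S' f)

variable {k : ℕ} {Λ : KGraph k} {R : Type} [CommRing R] {A : Type}
  [NonUnitalRing A] [Module R A] [SMulCommClass R A A] [IsScalarTower R A A]

/-- The degree-`n` homogeneous component of the `ℤᵏ`-grading of a Kumjian–Pask algebra. -/
def KPFamily.component (F : KPFamily Λ R A) (n : Fin k → ℤ) : Submodule R A :=
  Submodule.span R {x : A | ∃ f g : Λ.Mor, Λ.src f = Λ.src g ∧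
    (fun i => (Λ.deg f i : ℤ) - (Λ.deg g i : ℤ)) = n ∧ x = F.S f * F.S' g}

/-- A two-sided ideal is graded if it is spanned by its intersections with the
homogeneous components. -/
def KPFamily.IsGradedIdeal (F : KPFamily Λ R A) (I : TwoSidedIdeal A) : Prop :=
  (I : Set A) ⊆
    ↑(Submodule.span R (⋃ n : Fin k → ℤ, ((I : Set A) ∩ (F.component n : Set A))))

/-- A two-sided ideal is basic if `r • p_v ∈ I` for `r ≠ 0` implies `p_v ∈ I`. -/
def KPFamily.IsBasicIdeal (F : KPFamily Λ R A) (I : TwoSidedIdeal A) : Prop :=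
  ∀ (r : R) (v : Λ.Obj), r ≠ 0 → r • F.P v ∈ I → F.P v ∈ I

/-- The span `I_H = span_R {s_f s_g* : s(f) = s(g) ∈ H}` (a two-sided ideal when `H`
is saturated and hereditary). -/
def KPFamily.IH (F : KPFamily Λ R A) (H : Set Λ.Obj) : Submodule R A :=
  Submodule.span R {x : A | ∃ f g : Λ.Mor, Λ.src f = Λ.src g ∧ Λ.src f ∈ H ∧
    x = F.S f * F.S' g}

end KGraph

/-! ## Prime and primitive rings and ideals -/

/-- A two-sided ideal `P` is prime: it is proper, and `I₁I₂ ⊆ P` implies `I₁ ⊆ P` or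
`I₂ ⊆ P` for two-sided ideals `I₁, I₂`. -/
def IsPrimeTwoSidedIdeal {A : Type} [NonUnitalRing A] (P : TwoSidedIdeal A) : Prop :=
  (P : Set A) ≠ Set.univ ∧
  ∀ I J : TwoSidedIdeal A, (∀ x ∈ I, ∀ y ∈ J, x * y ∈ P) →
    (I : Set A) ⊆ (P : Set A) ∨ (J : Set A) ⊆ (P : Set A)

/-- A (possibly nonunital) ring is prime if its zero ideal is prime. -/
def IsPrimeRing (A : Type) [NonUnitalRing A] : Prop :=
  IsPrimeTwoSidedIdeal (⊥ : TwoSidedIdeal A)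

/-- A two-sided ideal `I` of a (possibly nonunital) ring is left primitive: there is a
simple left module (for the quotient ring, encoded as an `A`-module structure on an
additive group `M`) whose annihilator is exactly `I`.  For `I = ⊥` this says that `A`
has a faithful simple left module. -/
def IsPrimitiveTwoSidedIdeal {A : Type} [NonUnitalRing A] (I : TwoSidedIdeal A) : Prop :=
  ∃ (M : Type) (_ : AddCommGroup M) (sm : A → M → M),
    (∀ a b m, sm (a + b) m = sm a m + sm b m) ∧
    (∀ a m n, sm a (m + n) = sm a m + sm a n) ∧
    (∀ a b m, sm (a * b) m = sm a (sm b m)) ∧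
    (∃ a m, sm a m ≠ 0) ∧
    (∀ N : AddSubgroup M, (∀ a : A, ∀ m ∈ N, sm a m ∈ N) → N = ⊥ ∨ N = ⊤) ∧
    {a : A | ∀ m, sm a m = 0} = (I : Set A)

/-- A (possibly nonunital) ring is left primitive if it has a faithful simple left
module. -/
def IsLeftPrimitiveRing (A : Type) [NonUnitalRing A] : Prop :=
  IsPrimitiveTwoSidedIdeal (⊥ : TwoSidedIdeal A)

namespace KGraph

/-! ## The desourcification -/

variable {k : ℕ}

/-- The key invariant of a pair `(x; m)` in `V_Λ`: the vertex `x(m ∧ d(x))` and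
`m - m ∧ d(x)`.  Two pairs are `≈`-equivalent iff their keys agree. -/
noncomputable def vkey (Λ : KGraph k) : BPath Λ × (Fin k → ℕ) → Λ.Obj × (Fin k → ℕ) :=
  fun t => (t.1.vtx t.2, fun i => t.2 i - minDeg t.2 t.1.bdeg i)

/-- The vertex set `V_Λ / ≈` of the desourcification. -/
def VQ (Λ : KGraph k) : Type := Quotient (Setoid.ker (vkey Λ))

/-- The class `[x; m]`. -/
noncomputable def vmk (Λ : KGraph k) (x : BPath Λ) (m : Fin k → ℕ) : VQ Λ :=
  Quotient.mk (Setoid.ker (vkey Λ)) (x, m)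

/-- The set `P_Λ` of triples `(x; (m, n))` with `m ≤ n`. -/
def PPre (Λ : KGraph k) : Type := {t : BPath Λ × ((Fin k → ℕ) × (Fin k → ℕ)) // t.2.1 ≤ t.2.2}

/-- The key invariant of `(x; (m, n))`: the segment `x(m ∧ d(x), n ∧ d(x))`,
`m - m ∧ d(x)` and `n - m`.  Two triples are `∼`-equivalent iff their keys agree. -/
noncomputable def pkey (Λ : KGraph k) : PPre Λ → Λ.Mor × ((Fin k → ℕ) × (Fin k → ℕ)) :=
  fun t => (t.1.1.seg t.1.2.1 t.1.2.2 t.2,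
    (fun i => t.1.2.1 i - minDeg t.1.2.1 t.1.1.bdeg i, fun i => t.1.2.2 i - t.1.2.1 i))

/-- The morphism set `P_Λ / ∼` of the desourcification. -/
def PQ (Λ : KGraph k) : Type := Quotient (Setoid.ker (pkey Λ))

/-- The class `[x; (m, n)]`. -/
noncomputable def pmk (Λ : KGraph k) (x : BPath Λ) (m n : Fin k → ℕ) (h : m ≤ n) : PQ Λ :=
  Quotient.mk (Setoid.ker (pkey Λ)) ⟨(x, (m, n)), h⟩

/-- `w` is the boundary path `x(0, a) σᵇ(y)` obtained by gluing the initial segment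
`x(0,a)` of `x` with the shift `σᵇ(y)` of `y`. -/
def IsGluing {Λ : KGraph k} (x : BPath Λ) (a : Fin k → ℕ) (y : BPath Λ) (b : Fin k → ℕ)
    (w : BPath Λ) : Prop :=
  (∀ i, w.bdeg i = (a i : ℕ∞) + (y.bdeg i - (b i : ℕ∞))) ∧
  (∀ (h1 : (0 : Fin k → ℕ) ≤ a) (h2 : ∀ i, ((a i : ℕ∞)) ≤ w.bdeg i)
      (h3 : ∀ i, ((a i : ℕ∞)) ≤ x.bdeg i),
    w.mor 0 a h1 h2 = x.mor 0 a h1 h3) ∧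
  (∀ (p q : Fin k → ℕ) (hpq : p ≤ q) (h2 : ∀ i, (((a + q) i : ℕ∞)) ≤ w.bdeg i)
      (h4 : ∀ i, (((b + q) i : ℕ∞)) ≤ y.bdeg i),
    w.mor (a + p) (a + q) (add_le_add_right hpq a) h2 =
      y.mor (b + p) (b + q) (add_le_add_right hpq b) h4)

/-- `Λt` is (a realization of) the desourcification `Λ̃` of `Λ`: its vertices and
morphisms are identified with `V_Λ/≈` and `P_Λ/∼`, with range, source, degree,
identities and composition given by the defining formulas of Farthing's construction. -/
structure Desourcification (Λ Λt : KGraph k) : Type where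
  eObj : VQ Λ ≃ Λt.Obj
  eMor : PQ Λ ≃ Λt.Mor
  rng_eq : ∀ (x : BPath Λ) (m n : Fin k → ℕ) (h : m ≤ n),
    Λt.rng (eMor (pmk Λ x m n h)) = eObj (vmk Λ x m)
  src_eq : ∀ (x : BPath Λ) (m n : Fin k → ℕ) (h : m ≤ n),
    Λt.src (eMor (pmk Λ x m n h)) = eObj (vmk Λ x n)
  deg_eq : ∀ (x : BPath Λ) (m n : Fin k → ℕ) (h : m ≤ n),
    Λt.deg (eMor (pmk Λ x m n h)) = n - m
  id_eq : ∀ (x : BPath Λ) (m : Fin k → ℕ),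
    Λt.id (eObj (vmk Λ x m)) = eMor (pmk Λ x m m le_rfl)
  comp_eq : ∀ (x : BPath Λ) (m n : Fin k → ℕ) (hmn : m ≤ n)
      (y : BPath Λ) (p q : Fin k → ℕ) (hpq : p ≤ q)
      (h : Λt.src (eMor (pmk Λ x m n hmn)) = Λt.rng (eMor (pmk Λ y p q hpq)))
      (w : BPath Λ), IsGluing x (minDeg n x.bdeg) y (minDeg p y.bdeg) w →
    Λt.comp (eMor (pmk Λ x m n hmn)) (eMor (pmk Λ y p q hpq)) h =
      eMor (pmk Λ w m (n + (q - p)) (hmn.trans le_self_add))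

/-- `w = l x` is the boundary path extending the boundary path `x` by the
morphism `l` (with `x(0) = s(l)`). -/
def IsExtension {Λ : KGraph k} (l : Λ.Mor) (x : BPath Λ) (w : BPath Λ) : Prop :=
  (∀ i, w.bdeg i = (Λ.deg l i : ℕ∞) + x.bdeg i) ∧
  (∀ (h1 : (0 : Fin k → ℕ) ≤ Λ.deg l) (h2 : ∀ i, ((Λ.deg l i : ℕ∞)) ≤ w.bdeg i),
    w.mor 0 (Λ.deg l) h1 h2 = l) ∧
  (∀ (p q : Fin k → ℕ) (hpq : p ≤ q)
      (h2 : ∀ i, (((Λ.deg l + q) i : ℕ∞)) ≤ w.bdeg i)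
      (h4 : ∀ i, ((q i : ℕ∞)) ≤ x.bdeg i),
    w.mor (Λ.deg l + p) (Λ.deg l + q) (add_le_add_right hpq (Λ.deg l)) h2 =
      x.mor p q hpq h4)

/-- The graph of the map `ι : Λ → Λ̃`, `ι(l) = [l x; (0, d(l))]` for any
`x ∈ s(l)Λ^{≤∞}`. -/
def IotaRel {Λ Λt : KGraph k} (D : Desourcification Λ Λt) (l : Λ.Mor) (a : Λt.Mor) :
    Prop :=
  ∃ x w : BPath Λ, x.range = Λ.src l ∧ IsExtension l x w ∧
    a = D.eMor (pmk Λ w 0 (Λ.deg l) (fun i => Nat.zero_le _))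

/-- The graph of the map `π : Λ̃ → ι(Λ)`, `π([x; (m, n)]) = [x; (m ∧ d(x), n ∧ d(x))]`. -/
def PiRel {Λ Λt : KGraph k} (D : Desourcification Λ Λt) (a b : Λt.Mor) : Prop :=
  ∃ (x : BPath Λ) (m n : Fin k → ℕ) (hmn : m ≤ n),
    a = D.eMor (pmk Λ x m n hmn) ∧
    b = D.eMor (pmk Λ x (minDeg m x.bdeg) (minDeg n x.bdeg) (minDeg_mono hmn x.bdeg))

/-- The graph of the vertex map of `π : Λ̃ → ι(Λ)`, `π([x; m]) = [x; m ∧ d(x)]`. -/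
def PiVRel {Λ Λt : KGraph k} (D : Desourcification Λ Λt) (u u' : Λt.Obj) : Prop :=
  ∃ (x : BPath Λ) (m : Fin k → ℕ),
    u = D.eObj (vmk Λ x m) ∧ u' = D.eObj (vmk Λ x (minDeg m x.bdeg))

end KGraph

namespace KGraph

variable {k : ℕ} {Λ : KGraph k}

/-- Chosen factorization. -/
noncomputable def fac (Λ : KGraph k) (f : Λ.Mor) (m n : Fin k → ℕ) (h : Λ.deg f = m + n) :
    Λ.Mor × Λ.Mor := (Λ.factorization f m n h).choose

lemma fac_spec (f : Λ.Mor) (m n : Fin k → ℕ) (h : Λ.deg f = m + n) :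
    ∃ hc : Λ.src (Λ.fac f m n h).1 = Λ.rng (Λ.fac f m n h).2,
      Λ.deg (Λ.fac f m n h).1 = m ∧ Λ.deg (Λ.fac f m n h).2 = n ∧
      Λ.comp (Λ.fac f m n h).1 (Λ.fac f m n h).2 hc = f :=
  (Λ.factorization f m n h).choose_spec.1

lemma fac_unique {f : Λ.Mor} {m n : Fin k → ℕ} (h : Λ.deg f = m + n) {a b : Λ.Mor}
    (hc : Λ.src a = Λ.rng b) (hcomp : Λ.comp a b hc = f) (hm : Λ.deg a = m) (hn : Λ.deg b = n) :
    (a, b) = Λ.fac f m n h :=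
  (Λ.factorization f m n h).choose_spec.2 (a, b) ⟨hc, hm, hn, hcomp⟩

lemma comp_congr {f f' g g' : Λ.Mor} {h : Λ.src f = Λ.rng g} {h' : Λ.src f' = Λ.rng g'}
    (hf : f = f') (hg : g = g') : Λ.comp f g h = Λ.comp f' g' h' := by
  subst hf; subst hg; rfl

lemma eq_id_of_deg_zero {f : Λ.Mor} (hf : Λ.deg f = 0) : f = Λ.id (Λ.rng f) := by
  have h : Λ.deg f = 0 + 0 := by simpa using hf
  have h1 := fac_unique h (Λ.src_id (Λ.rng f)) (Λ.id_comp f) (Λ.deg_id _) hf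
  have h2 := fac_unique h ((Λ.rng_id (Λ.src f)).symm) (Λ.comp_id f) hf (Λ.deg_id _)
  have := h1.trans h2.symm
  exact (congrArg Prod.fst this).symm

lemma src_eq_rng_of_deg_zero {f : Λ.Mor} (hf : Λ.deg f = 0) : Λ.src f = Λ.rng f := by
  conv_lhs => rw [eq_id_of_deg_zero hf]
  exact Λ.src_id _

lemma comp_deg_zero_right {f g : Λ.Mor} (h : Λ.src f = Λ.rng g) (hg : Λ.deg g = 0) :
    Λ.comp f g h = f := by
  have hd : Λ.deg (Λ.comp f g h) = Λ.deg f + 0 := by rw [Λ.deg_comp, hg]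
  have h1 := fac_unique hd h rfl rfl hg
  have h2 := fac_unique hd ((Λ.rng_id (Λ.src (Λ.comp f g h))).symm)
    (Λ.comp_id _) (by rw [Λ.deg_comp, hg, add_zero]) (Λ.deg_id _)
  have := h1.trans h2.symm
  exact (congrArg Prod.fst this).symm

lemma comp_deg_zero_left {f g : Λ.Mor} (h : Λ.src f = Λ.rng g) (hf : Λ.deg f = 0) :
    Λ.comp f g h = g := by
  have hd : Λ.deg (Λ.comp f g h) = 0 + Λ.deg g := by rw [Λ.deg_comp, hf]
  have h1 := fac_unique hd h rfl hf rfl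
  have h2 := fac_unique hd (Λ.src_id (Λ.rng (Λ.comp f g h)))
    (Λ.id_comp _) (Λ.deg_id _) (by rw [Λ.deg_comp, hf, zero_add])
  have := h1.trans h2.symm
  exact (congrArg Prod.snd this).symm

lemma sub_add_cancel_deg {f : Λ.Mor} {q : Fin k → ℕ} (hq : q ≤ Λ.deg f) :
    Λ.deg f = q + (Λ.deg f - q) := by
  funext i; have h2 : q i ≤ Λ.deg f i := hq i; simp only [Pi.add_apply, Pi.sub_apply]; omega

/-- Initial segment of length `q`. -/
noncomputable def ini (f : Λ.Mor) (q : Fin k → ℕ) (hq : q ≤ Λ.deg f) : Λ.Mor :=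
  (Λ.fac f q (Λ.deg f - q) (sub_add_cancel_deg hq)).1

/-- Final segment starting at `q`. -/
noncomputable def tl (f : Λ.Mor) (q : Fin k → ℕ) (hq : q ≤ Λ.deg f) : Λ.Mor :=
  (Λ.fac f q (Λ.deg f - q) (sub_add_cancel_deg hq)).2

lemma src_ini_eq_rng_tl (f : Λ.Mor) (q : Fin k → ℕ) (hq : q ≤ Λ.deg f) :
    Λ.src (ini f q hq) = Λ.rng (tl f q hq) :=
  (fac_spec f q (Λ.deg f - q) (sub_add_cancel_deg hq)).choose

lemma deg_ini (f : Λ.Mor) (q : Fin k → ℕ) (hq : q ≤ Λ.deg f) : Λ.deg (ini f q hq) = q :=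
  (fac_spec f q (Λ.deg f - q) (sub_add_cancel_deg hq)).choose_spec.1

lemma deg_tl (f : Λ.Mor) (q : Fin k → ℕ) (hq : q ≤ Λ.deg f) :
    Λ.deg (tl f q hq) = Λ.deg f - q :=
  (fac_spec f q (Λ.deg f - q) (sub_add_cancel_deg hq)).choose_spec.2.1

lemma comp_ini_tl (f : Λ.Mor) (q : Fin k → ℕ) (hq : q ≤ Λ.deg f) :
    Λ.comp (ini f q hq) (tl f q hq) (src_ini_eq_rng_tl f q hq) = f :=
  (fac_spec f q (Λ.deg f - q) (sub_add_cancel_deg hq)).choose_spec.2.2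

lemma ini_tl_unique {f : Λ.Mor} {q : Fin k → ℕ} (hq : q ≤ Λ.deg f) {a b : Λ.Mor}
    (hc : Λ.src a = Λ.rng b) (hcomp : Λ.comp a b hc = f) (hm : Λ.deg a = q) :
    a = ini f q hq ∧ b = tl f q hq := by
  have hn : Λ.deg b = Λ.deg f - q := by
    have : Λ.deg f = Λ.deg a + Λ.deg b := by rw [← hcomp, Λ.deg_comp]
    funext i; have h1 := congrFun this i; have h2 := congrFun hm i
    simp only [Pi.add_apply] at h1; simp only [Pi.sub_apply]; omega
  have := fac_unique (sub_add_cancel_deg hq) hc hcomp hm hn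
  exact ⟨congrArg Prod.fst this, congrArg Prod.snd this⟩

lemma ini_congr {f g : Λ.Mor} {q q' : Fin k → ℕ} (hf : f = g) (hq : q = q')
    {h : q ≤ Λ.deg f} {h' : q' ≤ Λ.deg g} : ini f q h = ini g q' h' := by
  subst hf; subst hq; rfl

lemma tl_congr {f g : Λ.Mor} {q q' : Fin k → ℕ} (hf : f = g) (hq : q = q')
    {h : q ≤ Λ.deg f} {h' : q' ≤ Λ.deg g} : tl f q h = tl g q' h' := by
  subst hf; subst hq; rfl

lemma rng_ini (f : Λ.Mor) (q : Fin k → ℕ) (hq : q ≤ Λ.deg f) :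
    Λ.rng (ini f q hq) = Λ.rng f := by
  conv_rhs => rw [← comp_ini_tl f q hq]
  rw [Λ.rng_comp]

lemma src_tl (f : Λ.Mor) (q : Fin k → ℕ) (hq : q ≤ Λ.deg f) :
    Λ.src (tl f q hq) = Λ.src f := by
  conv_rhs => rw [← comp_ini_tl f q hq]
  rw [Λ.src_comp]

lemma tl_zero (f : Λ.Mor) (h : (0 : Fin k → ℕ) ≤ Λ.deg f) : tl f 0 h = f :=
  ((ini_tl_unique h (Λ.src_id (Λ.rng f)) (Λ.id_comp f) (Λ.deg_id _)).2).symm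

lemma ini_deg_self (f : Λ.Mor) (h : Λ.deg f ≤ Λ.deg f) : ini f (Λ.deg f) h = f :=
  ((ini_tl_unique h ((Λ.rng_id (Λ.src f)).symm) (Λ.comp_id f) rfl).1).symm
lemma ini_comp {g t : Λ.Mor} (h : Λ.src g = Λ.rng t) {q : Fin k → ℕ} (hq : q ≤ Λ.deg g)
    (hq' : q ≤ Λ.deg (Λ.comp g t h)) : ini (Λ.comp g t h) q hq' = ini g q hq := by
  have hc : Λ.src (ini g q hq) = Λ.rng (Λ.comp (tl g q hq) t ((src_tl g q hq).trans h)) := by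
    rw [Λ.rng_comp]; exact src_ini_eq_rng_tl g q hq
  have hcomp : Λ.comp (ini g q hq) (Λ.comp (tl g q hq) t ((src_tl g q hq).trans h)) hc
      = Λ.comp g t h :=
    (Λ.comp_assoc (ini g q hq) (tl g q hq) t (src_ini_eq_rng_tl g q hq)
      ((src_tl g q hq).trans h)).symm.trans (comp_congr (comp_ini_tl g q hq) rfl)
  exact ((ini_tl_unique hq' hc hcomp (deg_ini g q hq)).1).symm

lemma tl_comp {g t : Λ.Mor} (h : Λ.src g = Λ.rng t) {q : Fin k → ℕ} (hq : q ≤ Λ.deg g)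
    (hq' : q ≤ Λ.deg (Λ.comp g t h)) :
    tl (Λ.comp g t h) q hq' = Λ.comp (tl g q hq) t ((src_tl g q hq).trans h) := by
  have hc : Λ.src (ini g q hq) = Λ.rng (Λ.comp (tl g q hq) t ((src_tl g q hq).trans h)) := by
    rw [Λ.rng_comp]; exact src_ini_eq_rng_tl g q hq
  have hcomp : Λ.comp (ini g q hq) (Λ.comp (tl g q hq) t ((src_tl g q hq).trans h)) hc
      = Λ.comp g t h :=
    (Λ.comp_assoc (ini g q hq) (tl g q hq) t (src_ini_eq_rng_tl g q hq)
      ((src_tl g q hq).trans h)).symm.trans (comp_congr (comp_ini_tl g q hq) rfl)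
  exact ((ini_tl_unique hq' hc hcomp (deg_ini g q hq)).2).symm

lemma src_ini_eq_rng_ini {f : Λ.Mor} {p q : Fin k → ℕ} (hp : p ≤ Λ.deg f)
    (hq : q ≤ Λ.deg (tl f p hp)) :
    Λ.src (ini f p hp) = Λ.rng (ini (tl f p hp) q hq) := by
  rw [rng_ini]; exact src_ini_eq_rng_tl f p hp

lemma ini_tl_split {f : Λ.Mor} {p q : Fin k → ℕ} (hp : p ≤ Λ.deg f)
    (hq : q ≤ Λ.deg (tl f p hp)) (hpq : p + q ≤ Λ.deg f) :
    Λ.comp (ini f p hp) (ini (tl f p hp) q hq) (src_ini_eq_rng_ini hp hq)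
      = ini f (p + q) hpq ∧ tl (tl f p hp) q hq = tl f (p + q) hpq := by
  have hc : Λ.src (Λ.comp (ini f p hp) (ini (tl f p hp) q hq) (src_ini_eq_rng_ini hp hq))
      = Λ.rng (tl (tl f p hp) q hq) := by
    rw [Λ.src_comp]; exact src_ini_eq_rng_tl _ q hq
  have hcomp : Λ.comp (Λ.comp (ini f p hp) (ini (tl f p hp) q hq) (src_ini_eq_rng_ini hp hq))
      (tl (tl f p hp) q hq) hc = f := by
    have A := Λ.comp_assoc (ini f p hp) (ini (tl f p hp) q hq) (tl (tl f p hp) q hq)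
      (src_ini_eq_rng_ini hp hq) (src_ini_eq_rng_tl _ q hq)
    refine A.trans ?_
    refine (comp_congr (h' := src_ini_eq_rng_tl f p hp) rfl (comp_ini_tl (tl f p hp) q hq)).trans ?_
    exact comp_ini_tl f p hp
  have hdeg : Λ.deg (Λ.comp (ini f p hp) (ini (tl f p hp) q hq) (src_ini_eq_rng_ini hp hq))
      = p + q := by rw [Λ.deg_comp, deg_ini, deg_ini]
  have := ini_tl_unique hpq hc hcomp hdeg
  exact ⟨this.1, this.2⟩

lemma sub_le_deg_tl {f : Λ.Mor} {p q : Fin k → ℕ} (hq : q ≤ Λ.deg f) (hpq : p ≤ q) :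
    q - p ≤ Λ.deg (tl f p (hpq.trans hq)) := by
  rw [deg_tl]; intro i
  simp only [Pi.sub_apply]
  exact Nat.sub_le_sub_right (hq i) (p i)

/-- The segment of `f` from `p` to `q`. -/
noncomputable def sg (f : Λ.Mor) (p q : Fin k → ℕ) (hpq : p ≤ q) (hq : q ≤ Λ.deg f) : Λ.Mor :=
  ini (tl f p (hpq.trans hq)) (q - p) (sub_le_deg_tl hq hpq)

lemma deg_sg (f : Λ.Mor) (p q : Fin k → ℕ) (hpq : p ≤ q) (hq : q ≤ Λ.deg f) :
    Λ.deg (sg f p q hpq hq) = q - p := deg_ini _ _ _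

lemma sg_congr {f g : Λ.Mor} {p q p' q' : Fin k → ℕ} (hf : f = g) (hp : p = p') (hq : q = q')
    {h1 : p ≤ q} {h2 : q ≤ Λ.deg f} {h1' : p' ≤ q'} {h2' : q' ≤ Λ.deg g} :
    sg f p q h1 h2 = sg g p' q' h1' h2' := by
  subst hf; subst hp; subst hq; rfl

lemma rng_sg (f : Λ.Mor) (p q : Fin k → ℕ) (hpq : p ≤ q) (hq : q ≤ Λ.deg f) :
    Λ.rng (sg f p q hpq hq) = Λ.rng (tl f p (hpq.trans hq)) := rng_ini _ _ _

lemma src_sg (f : Λ.Mor) (p q : Fin k → ℕ) (hpq : p ≤ q) (hq : q ≤ Λ.deg f) :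
    Λ.src (sg f p q hpq hq) = Λ.rng (tl f q hq) := by
  have hpq' : p + (q - p) ≤ Λ.deg f := by
    intro i; have h1 : p i ≤ q i := hpq i; have h2 : q i ≤ Λ.deg f i := hq i
    simp only [Pi.add_apply, Pi.sub_apply]; omega
  rw [sg, src_ini_eq_rng_tl, (ini_tl_split (hpq.trans hq) (sub_le_deg_tl hq hpq) hpq').2]
  exact congrArg Λ.rng (tl_congr rfl (funext fun i => by
    simp only [Pi.add_apply, Pi.sub_apply]; have h9 : p i ≤ q i := hpq i; omega))

lemma sg_eq_id (f : Λ.Mor) (p : Fin k → ℕ) (hq : p ≤ Λ.deg f) {h : p ≤ p} :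
    sg f p p h hq = Λ.id (Λ.rng (sg f p p h hq)) :=
  eq_id_of_deg_zero (by rw [deg_sg]; funext i; simp only [Pi.sub_apply, Pi.zero_apply]; omega)

lemma sg_comp_sg {f : Λ.Mor} {p q r : Fin k → ℕ} (hpq : p ≤ q) (hqr : q ≤ r)
    (hr : r ≤ Λ.deg f) (hq : q ≤ Λ.deg f)
    {hc : Λ.src (sg f p q hpq hq) = Λ.rng (sg f q r hqr hr)} :
    Λ.comp (sg f p q hpq hq) (sg f q r hqr hr) hc = sg f p r (hpq.trans hqr) hr := by
  have hpq' : p + (q - p) ≤ Λ.deg f := by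
    intro i; have h1 : p i ≤ q i := hpq i; have h2 : q i ≤ Λ.deg f i := hq i
    simp only [Pi.add_apply, Pi.sub_apply]; omega
  have hbase : tl f q hq = tl (tl f p (hpq.trans hq)) (q - p) (sub_le_deg_tl hq hpq) := by
    refine ((ini_tl_split (hpq.trans hq) (sub_le_deg_tl hq hpq) hpq').2.trans ?_).symm
    exact tl_congr rfl (funext fun i => by
      simp only [Pi.add_apply, Pi.sub_apply]; have h9 : p i ≤ q i := hpq i; omega)
  have hq2 : r - q ≤ Λ.deg (tl (tl f p (hpq.trans hq)) (q - p) (sub_le_deg_tl hq hpq)) := by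
    rw [← hbase, deg_tl]; intro i
    simp only [Pi.sub_apply]; exact Nat.sub_le_sub_right (hr i) (q i)
  have step1 : Λ.comp (sg f p q hpq hq) (sg f q r hqr hr) hc
      = Λ.comp (ini (tl f p (hpq.trans hq)) (q - p) (sub_le_deg_tl hq hpq))
          (ini (tl (tl f p (hpq.trans hq)) (q - p) (sub_le_deg_tl hq hpq)) (r - q) hq2)
          (src_ini_eq_rng_ini _ _) :=
    comp_congr rfl (ini_congr hbase rfl)
  have hsum : (q - p) + (r - q) ≤ Λ.deg (tl f p (hpq.trans hq)) := by
    rw [deg_tl]; intro i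
    simp only [Pi.add_apply, Pi.sub_apply]
    have h1 : p i ≤ q i := hpq i; have h2 : q i ≤ r i := hqr i
    have h3 : r i ≤ Λ.deg f i := hr i; omega
  rw [step1, (ini_tl_split (sub_le_deg_tl hq hpq) hq2 hsum).1]
  exact ini_congr rfl (funext fun i => by
    simp only [Pi.add_apply, Pi.sub_apply]
    have h1 : p i ≤ q i := hpq i; have h2 : q i ≤ r i := hqr i; omega)

lemma sg_comp_left {g t : Λ.Mor} (h : Λ.src g = Λ.rng t) {p q : Fin k → ℕ} (hpq : p ≤ q)
    (hq : q ≤ Λ.deg g) (hq' : q ≤ Λ.deg (Λ.comp g t h)) :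
    sg (Λ.comp g t h) p q hpq hq' = sg g p q hpq hq := by
  have h1 : tl (Λ.comp g t h) p (hpq.trans hq')
      = Λ.comp (tl g p (hpq.trans hq)) t ((src_tl g p (hpq.trans hq)).trans h) :=
    tl_comp h (hpq.trans hq) (hpq.trans hq')
  have hmid : q - p ≤ Λ.deg (Λ.comp (tl g p (hpq.trans hq)) t
      ((src_tl g p (hpq.trans hq)).trans h)) := by
    rw [Λ.deg_comp]; exact le_trans (sub_le_deg_tl hq hpq) le_self_add
  exact (ini_congr (h' := hmid) h1 rfl).trans
    (ini_comp _ (sub_le_deg_tl hq hpq) hmid)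

lemma sg_ini {f : Λ.Mor} {c p q : Fin k → ℕ} (hc : c ≤ Λ.deg f) (hpq : p ≤ q)
    (hq : q ≤ Λ.deg (ini f c hc)) (hq' : q ≤ Λ.deg f) :
    sg (ini f c hc) p q hpq hq = sg f p q hpq hq' := by
  have := sg_comp_left (src_ini_eq_rng_tl f c hc) hpq hq
    (q := q) (by rw [comp_ini_tl]; exact hq')
  refine this.symm.trans ?_
  exact sg_congr (comp_ini_tl f c hc) rfl rfl

lemma sg_zero_deg (f : Λ.Mor) {h : (0 : Fin k → ℕ) ≤ Λ.deg f} {h' : Λ.deg f ≤ Λ.deg f} :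
    sg f 0 (Λ.deg f) h h' = f := by
  have h1 : tl f 0 (h.trans h') = f := tl_zero f _
  have h2 : Λ.deg f - 0 = Λ.deg f := by
    funext i; simp only [Pi.sub_apply, Pi.zero_apply]; omega
  exact (ini_congr (h' := le_rfl) h1 h2).trans (ini_deg_self f le_rfl)
lemma coe_minDeg (m : Fin k → ℕ) (d : Fin k → ℕ∞) (i : Fin k) :
    ((minDeg m d i : ℕ) : ℕ∞) = min (m i : ℕ∞) (d i) :=
  ENat.coe_toNat (minDeg_ne_top m d i)

lemma minDeg_le (m : Fin k → ℕ) (d : Fin k → ℕ∞) : minDeg m d ≤ m := fun i => by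
  have h := coe_minDeg m d i
  have : ((minDeg m d i : ℕ) : ℕ∞) ≤ (m i : ℕ∞) := h ▸ min_le_left _ _
  exact_mod_cast this

lemma minDeg_zero (d : Fin k → ℕ∞) : minDeg 0 d = 0 := by
  funext i
  simp [minDeg]

lemma minDeg_eq_self {m : Fin k → ℕ} {d : Fin k → ℕ∞} (h : ∀ i, (m i : ℕ∞) ≤ d i) :
    minDeg m d = m := by
  funext i
  rw [minDeg, min_eq_left (h i), ENat.toNat_coe]

lemma minDeg_minDeg (m : Fin k → ℕ) (d : Fin k → ℕ∞) : minDeg (minDeg m d) d = minDeg m d :=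
  minDeg_eq_self (minDeg_le_deg m d)

lemma BPath.mor_congr (x : BPath Λ) {p q p' q' : Fin k → ℕ} (hp : p = p') (hq : q = q')
    {h1 : p ≤ q} {h1' : p' ≤ q'} {h2 : ∀ i, (q i : ℕ∞) ≤ x.bdeg i}
    {h2' : ∀ i, (q' i : ℕ∞) ≤ x.bdeg i} : x.mor p q h1 h2 = x.mor p' q' h1' h2' := by
  subst hp; subst hq; rfl

lemma zero_le_bdeg (d : Fin k → ℕ∞) : ∀ i, (((0 : Fin k → ℕ) i : ℕ) : ℕ∞) ≤ d i := fun i => by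
  simp

lemma BPath.range_eq_mor_zero (x : BPath Λ) (h0 : ∀ i, (((0 : Fin k → ℕ) i : ℕ) : ℕ∞) ≤ x.bdeg i) :
    x.range = Λ.rng (x.mor 0 0 le_rfl h0) := by
  unfold BPath.range BPath.vtx
  exact congrArg Λ.rng (x.mor_congr (minDeg_zero x.bdeg) (minDeg_zero x.bdeg))

lemma BPath.vtx_eq_of_le (x : BPath Λ) {m : Fin k → ℕ} (h : ∀ i, (m i : ℕ∞) ≤ x.bdeg i) :
    x.vtx m = Λ.rng (x.mor m m le_rfl h) := by
  unfold BPath.vtx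
  exact congrArg Λ.rng (x.mor_congr (minDeg_eq_self h) (minDeg_eq_self h))

/-- Build a boundary path from a coherent family of finite approximations. -/
noncomputable def BPath.mk'' (Λ : KGraph k) (bd : Fin k → ℕ∞)
    (F : ∀ q : Fin k → ℕ, (∀ i, (q i : ℕ∞) ≤ bd i) → Λ.Mor)
    (hdeg : ∀ q hq, Λ.deg (F q hq) = q)
    (hcoh : ∀ q q' (hq : ∀ i, (q i : ℕ∞) ≤ bd i) (hq' : ∀ i, (q' i : ℕ∞) ≤ bd i)
      (hle : q ≤ q'), F q hq = ini (F q' hq') q (by rw [hdeg]; exact hle))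
    (hbdry : ∀ p hp i, (p i : ℕ∞) = bd i →
      ¬∃ g : Λ.Mor, Λ.rng g = Λ.src (F p hp) ∧ Λ.deg g = unitVec i) : BPath Λ where
  bdeg := bd
  mor p q hpq hq := sg (F q hq) p q hpq (le_of_eq (hdeg q hq).symm)
  deg_mor p q hpq hq := deg_sg _ _ _ _ _
  mor_self p hp := sg_eq_id _ _ _
  src_mor p q hpq hq :=
    (src_sg _ _ _ _ _).trans (rng_sg (F q hq) q q le_rfl (le_of_eq (hdeg q hq).symm)).symm
  rng_mor p q hpq hq hp := by
    have hF : F p hp = ini (F q hq) p (by rw [hdeg]; exact hpq) := hcoh p q hp hq hpq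
    have hz : Λ.deg (tl (F p hp) p (le_of_eq (hdeg p hp).symm)) = 0 := by
      rw [deg_tl, hdeg]; funext i; simp only [Pi.sub_apply, Pi.zero_apply]; omega
    calc Λ.rng (sg (F q hq) p q hpq (le_of_eq (hdeg q hq).symm))
        = Λ.rng (tl (F q hq) p (hpq.trans (le_of_eq (hdeg q hq).symm))) := rng_sg _ _ _ _ _
      _ = Λ.src (ini (F q hq) p (by rw [hdeg]; exact hpq)) := (src_ini_eq_rng_tl _ _ _).symm
      _ = Λ.src (F p hp) := by rw [← hF]
      _ = Λ.src (tl (F p hp) p (le_of_eq (hdeg p hp).symm)) := (src_tl _ _ _).symm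
      _ = Λ.rng (tl (F p hp) p (le_of_eq (hdeg p hp).symm)) := src_eq_rng_of_deg_zero hz
      _ = Λ.rng (sg (F p hp) p p le_rfl (le_of_eq (hdeg p hp).symm)) := (rng_sg _ _ _ _ _).symm
  comp_mor p q r hpq hqr hr hq := by
    have hF : F q hq = ini (F r hr) q (by rw [hdeg]; exact hqr) := hcoh q r hq hr hqr
    have hmid : q ≤ Λ.deg (ini (F r hr) q (by rw [hdeg]; exact hqr)) :=
      le_of_eq (deg_ini _ _ _).symm
    have step : sg (F q hq) p q hpq (le_of_eq (hdeg q hq).symm)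
        = sg (F r hr) p q hpq (hqr.trans (le_of_eq (hdeg r hr).symm)) := by
      refine (sg_congr (h1' := hpq) (h2' := hmid) hF rfl rfl).trans ?_
      exact sg_ini _ hpq hmid _
    have hc2 : Λ.src (sg (F r hr) p q hpq (hqr.trans (le_of_eq (hdeg r hr).symm)))
        = Λ.rng (sg (F r hr) q r hqr (le_of_eq (hdeg r hr).symm)) := by
      rw [src_sg, rng_sg]
    refine (comp_congr (h' := hc2) step rfl).trans ?_
    exact sg_comp_sg hpq hqr _ _
  boundary p hp i hpi := by
    have hz : Λ.deg (tl (F p hp) p (le_of_eq (hdeg p hp).symm)) = 0 := by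
      rw [deg_tl, hdeg]; funext i; simp only [Pi.sub_apply, Pi.zero_apply]; omega
    have hv : Λ.rng (sg (F p hp) p p le_rfl (le_of_eq (hdeg p hp).symm)) = Λ.src (F p hp) := by
      rw [rng_sg, ← src_eq_rng_of_deg_zero hz, src_tl]
    rw [hv]
    exact hbdry p hp i hpi

lemma enat_add_le_of_le_sub {a b : ℕ} {c : ℕ∞} (hb : (b : ℕ∞) ≤ c) (ha : (a : ℕ∞) ≤ c - b) :
    ((b + a : ℕ) : ℕ∞) ≤ c := by
  induction c using ENat.recTopCoe with
  | top => exact le_top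
  | coe n =>
    have hb' : b ≤ n := by exact_mod_cast hb
    have ha' : a ≤ n - b := by
      rw [← ENat.coe_sub] at ha
      exact_mod_cast ha
    have : b + a ≤ n := by omega
    exact_mod_cast this

/-- The shifted boundary path `σᵇ x`. -/
noncomputable def BPath.shift (x : BPath Λ) (b : Fin k → ℕ)
    (hb : ∀ i, (b i : ℕ∞) ≤ x.bdeg i) : BPath Λ where
  bdeg i := x.bdeg i - b i
  mor p q hpq hq := x.mor (b + p) (b + q) (add_le_add_right hpq b)
    (fun i => enat_add_le_of_le_sub (hb i) (hq i))
  deg_mor p q hpq hq := by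
    rw [x.deg_mor]; funext i; simp only [Pi.sub_apply, Pi.add_apply]; omega
  mor_self p hp := x.mor_self (b + p) _
  src_mor p q hpq hq := x.src_mor (b + p) (b + q) _ _
  rng_mor p q hpq hq hp := x.rng_mor (b + p) (b + q) _ _ _
  comp_mor p q r hpq hqr hr hq := x.comp_mor (b + p) (b + q) (b + r) _ _ _ _
  boundary p hp i hpi := by
    have hpi' : (p i : ℕ∞) = x.bdeg i - (b i : ℕ∞) := hpi
    have hb' : (b i : ℕ∞) ≤ x.bdeg i := hb i
    have hne : x.bdeg i ≠ ⊤ := by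
      intro hT
      rw [hT, ENat.top_sub_coe] at hpi'
      exact (ENat.coe_ne_top _) hpi'
    have hxi : x.bdeg i = ((x.bdeg i).toNat : ℕ∞) := (ENat.coe_toNat hne).symm
    have h : (((b + p) i : ℕ) : ℕ∞) = x.bdeg i := by
      rw [hxi] at hpi' hb' ⊢
      have hb2 : b i ≤ (x.bdeg i).toNat := by exact_mod_cast hb'
      rw [← ENat.coe_sub] at hpi'
      have hp2 : p i = (x.bdeg i).toNat - b i := by exact_mod_cast hpi'
      have h3 : (b + p) i = (x.bdeg i).toNat := by simp only [Pi.add_apply]; omega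
      exact_mod_cast congrArg (fun t : ℕ => (t : ℕ∞)) h3
    exact x.boundary (b + p) _ i h

lemma BPath.shift_range (x : BPath Λ) (b : Fin k → ℕ) (hb : ∀ i, (b i : ℕ∞) ≤ x.bdeg i) :
    (x.shift b hb).range = x.vtx b := by
  rw [BPath.range_eq_mor_zero _ (zero_le_bdeg _), x.vtx_eq_of_le hb]
  show Λ.rng (x.mor (b + 0) (b + 0) _ _) = _
  exact congrArg Λ.rng (x.mor_congr (add_zero b) (add_zero b))
lemma ini_ini {f : Λ.Mor} {q p : Fin k → ℕ} (hq : q ≤ Λ.deg f) (hp : p ≤ q)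
    (h' : p ≤ Λ.deg (ini f q hq)) : ini (ini f q hq) p h' = ini f p (hp.trans hq) := by
  have h1 : ini f p (hp.trans hq)
      = ini (Λ.comp (ini f q hq) (tl f q hq) (src_ini_eq_rng_tl f q hq)) p
        (by rw [comp_ini_tl]; exact hp.trans hq) :=
    ini_congr (comp_ini_tl f q hq).symm rfl
  rw [h1, ini_comp _ h']

lemma exists_pos_coord {n : Fin k → ℕ} (h : n ≠ 0) : ∃ j, n j ≠ 0 := by
  by_contra hc
  push_neg at hc
  exact h (funext fun j => hc j)

/-- Local convexity propagates existence of `eᵢ`-edges forwards along paths with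
zero `i`-th degree. -/
lemma alive_prop (hlc : Λ.LocallyConvex) :
    ∀ (N : ℕ) (t : Λ.Mor) (i : Fin k), (∑ j, Λ.deg t j) = N → Λ.deg t i = 0 →
    (∃ g, Λ.rng g = Λ.rng t ∧ Λ.deg g = unitVec i) →
    ∃ g, Λ.rng g = Λ.src t ∧ Λ.deg g = unitVec i := by
  intro N
  induction N using Nat.strong_induction_on with
  | _ N IH =>
    intro t i hsum hdi hg
    obtain ⟨g, hg1, hg2⟩ := hg
    rcases Nat.eq_zero_or_pos N with hN | hN
    · have h0 : Λ.deg t = 0 := by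
        funext j
        have := (Finset.sum_eq_zero_iff).mp (hsum.trans hN) j (Finset.mem_univ j)
        simpa using this
      exact ⟨g, by rw [src_eq_rng_of_deg_zero h0]; exact hg1, hg2⟩
    · have hsum' : (∑ j, Λ.deg t j) ≠ 0 := by omega
      obtain ⟨j, _, hj⟩ := Finset.exists_ne_zero_of_sum_ne_zero hsum'
      have hij : i ≠ j := by
        intro he; rw [he] at hdi; exact hj hdi
      have hu : unitVec j ≤ Λ.deg t := by
        intro i'
        simp only [unitVec]
        by_cases hi' : i' = j
        · rw [if_pos hi', hi']
          omega
        · rw [if_neg hi']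
          omega
      set t1 := ini t (unitVec j) hu with ht1
      set t' := tl t (unitVec j) hu with ht'
      have hlc2 := (hlc (Λ.rng t1) i j hij g t1
        (hg1.trans (rng_ini t (unitVec j) hu).symm) hg2 rfl (deg_ini t (unitVec j) hu)).2
      obtain ⟨g', hg'1, hg'2⟩ := hlc2
      have hdecomp : ∀ j', Λ.deg t j' = Λ.deg t' j' + unitVec j j' := by
        intro j'
        rw [ht', deg_tl]
        have huj : unitVec j j' ≤ Λ.deg t j' := hu j'
        simp only [Pi.sub_apply]; omega
      have hsum2 : (∑ j', Λ.deg t' j') = N - 1 := by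
        have h1 : (∑ j', Λ.deg t j') = (∑ j', Λ.deg t' j') + (∑ j', unitVec j j') := by
          rw [← Finset.sum_add_distrib]
          exact Finset.sum_congr rfl (fun j' _ => hdecomp j')
        have h2 : (∑ j', unitVec j j') = 1 := by
          simp only [unitVec]
          rw [Finset.sum_ite_eq' Finset.univ j (fun _ => 1)]
          simp
        rw [h1, h2] at hsum; omega
      have hdi' : Λ.deg t' i = 0 := by
        have := hdecomp i
        omega
      have halive : ∃ g0, Λ.rng g0 = Λ.rng t' ∧ Λ.deg g0 = unitVec i :=
        ⟨g', hg'1.trans (src_ini_eq_rng_tl t (unitVec j) hu), hg'2⟩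
      obtain ⟨g'', hg''1, hg''2⟩ := IH (N - 1) (by omega) t' i hsum2 hdi' halive
      exact ⟨g'', hg''1.trans (src_tl t (unitVec j) hu), hg''2⟩

lemma dead_prop (hlc : Λ.LocallyConvex) (t : Λ.Mor) (i : Fin k) (hdi : Λ.deg t i = 0)
    (hdead : ¬∃ g, Λ.rng g = Λ.src t ∧ Λ.deg g = unitVec i) :
    ¬∃ g, Λ.rng g = Λ.rng t ∧ Λ.deg g = unitVec i :=
  fun h => hdead (alive_prop hlc (∑ j, Λ.deg t j) t i rfl hdi h)

/-- Every vertex has a maximal path of degree at most `(1,…,1)`. -/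
lemma exists_max_path (Λ : KGraph k) (w : Λ.Obj) :
    ∃ f : Λ.Mor, Λ.rng f = w ∧ Λ.deg f ≤ 1 ∧
      ∀ i, Λ.deg f i = 0 → ¬∃ g, Λ.rng g = Λ.src f ∧ Λ.deg g = unitVec i := by
  classical
  set P : ℕ → Prop := fun s => ∃ f : Λ.Mor, Λ.rng f = w ∧ Λ.deg f ≤ 1 ∧ (∑ j, Λ.deg f j) = s
    with hP
  have hP0 : P 0 := ⟨Λ.id w, Λ.rng_id w,
    by rw [Λ.deg_id]; intro i; simp, by rw [Λ.deg_id]; simp⟩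
  have hub : ∀ s, P s → s ≤ k := by
    rintro s ⟨f, _, hle, hsum⟩
    calc s = ∑ j, Λ.deg f j := hsum.symm
      _ ≤ ∑ _j : Fin k, 1 := Finset.sum_le_sum (fun j _ => hle j)
      _ = k := by simp
  obtain ⟨f, hrng, hle, hsum⟩ : P (Nat.findGreatest P k) :=
    Nat.findGreatest_spec (Nat.zero_le k) hP0
  refine ⟨f, hrng, hle, ?_⟩
  rintro i hdi ⟨g, hg1, hg2⟩
  have hP' : P (Nat.findGreatest P k + 1) := by
    refine ⟨Λ.comp f g hg1.symm, by rw [Λ.rng_comp]; exact hrng, ?_, ?_⟩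
    · rw [Λ.deg_comp, hg2]
      intro j
      by_cases hj : j = i
      · subst hj
        have hh : Λ.deg f j = 0 := hdi
        simp only [Pi.add_apply, unitVec, Pi.one_apply, if_true, eq_self_iff_true]
        omega
      · have hh : Λ.deg f j ≤ 1 := hle j
        simp only [Pi.add_apply, unitVec, Pi.one_apply] at hh ⊢
        rw [if_neg hj]
        simpa using hh
    · rw [Λ.deg_comp, hg2]
      have h2 : (∑ j', unitVec i j') = 1 := by
        simp only [unitVec]
        rw [Finset.sum_ite_eq' Finset.univ i (fun _ => 1)]
        simp
      rw [← hsum, ← h2, ← Finset.sum_add_distrib]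
      rfl
  have hk : Nat.findGreatest P k + 1 ≤ k := hub _ hP'
  have := Nat.le_findGreatest hk hP'
  omega

/-- A chosen maximal path at `w`. -/
noncomputable def nxt (Λ : KGraph k) (w : Λ.Obj) : Λ.Mor := (exists_max_path Λ w).choose

lemma nxt_spec (Λ : KGraph k) (w : Λ.Obj) :
    Λ.rng (nxt Λ w) = w ∧ Λ.deg (nxt Λ w) ≤ 1 ∧
      ∀ i, Λ.deg (nxt Λ w) i = 0 →
        ¬∃ g, Λ.rng g = Λ.src (nxt Λ w) ∧ Λ.deg g = unitVec i :=
  (exists_max_path Λ w).choose_spec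

/-- The canonical chain of paths at `v`. -/
noncomputable def lam (Λ : KGraph k) (v : Λ.Obj) : ℕ → Λ.Mor
  | 0 => Λ.id v
  | n + 1 => Λ.comp (lam Λ v n) (nxt Λ (Λ.src (lam Λ v n))) ((nxt_spec Λ _).1).symm

lemma lam_rng (Λ : KGraph k) (v : Λ.Obj) : ∀ n, Λ.rng (lam Λ v n) = v
  | 0 => Λ.rng_id v
  | n + 1 => by
    show Λ.rng (Λ.comp _ _ _) = v
    rw [Λ.rng_comp]; exact lam_rng Λ v n

lemma lam_le (Λ : KGraph k) (v : Λ.Obj) {n m : ℕ} (h : n ≤ m) :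
    Λ.deg (lam Λ v n) ≤ Λ.deg (lam Λ v m) := by
  induction m, h using Nat.le_induction with
  | base => exact le_rfl
  | succ m hm ih =>
    refine ih.trans ?_
    show Λ.deg (lam Λ v m) ≤ Λ.deg (Λ.comp _ _ _)
    rw [Λ.deg_comp]; exact le_self_add

lemma lam_ext (Λ : KGraph k) (v : Λ.Obj) {n m : ℕ} (h : n ≤ m) :
    ∃ (t : Λ.Mor) (ht : Λ.src (lam Λ v n) = Λ.rng t),
      lam Λ v m = Λ.comp (lam Λ v n) t ht := by
  induction m, h using Nat.le_induction with
  | base => exact ⟨Λ.id (Λ.src (lam Λ v n)), (Λ.rng_id _).symm, (Λ.comp_id _).symm⟩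
  | succ m hm ih =>
    obtain ⟨t, ht, heq⟩ := ih
    have hst : Λ.src t = Λ.rng (nxt Λ (Λ.src (lam Λ v m))) := by
      rw [(nxt_spec Λ _).1, heq, Λ.src_comp]
    refine ⟨Λ.comp t (nxt Λ (Λ.src (lam Λ v m))) hst, by rw [Λ.rng_comp]; exact ht, ?_⟩
    have hμ : Λ.src (Λ.comp (lam Λ v n) t ht) = Λ.rng (nxt Λ (Λ.src (lam Λ v m))) := by
      rw [Λ.src_comp, (nxt_spec Λ _).1, heq, Λ.src_comp]
    show Λ.comp (lam Λ v m) _ _ = _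
    refine (comp_congr (h' := hμ) heq rfl).trans ?_
    exact Λ.comp_assoc _ _ _ _ _

lemma ini_lam_indep (Λ : KGraph k) (v : Λ.Obj) {n m : ℕ} {q : Fin k → ℕ}
    (h1 : q ≤ Λ.deg (lam Λ v n)) (h2 : q ≤ Λ.deg (lam Λ v m)) :
    ini (lam Λ v n) q h1 = ini (lam Λ v m) q h2 := by
  have key : ∀ (n m : ℕ), n ≤ m → ∀ (h1 : q ≤ Λ.deg (lam Λ v n)) (h2 : q ≤ Λ.deg (lam Λ v m)),
      ini (lam Λ v n) q h1 = ini (lam Λ v m) q h2 := by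
    intro n m hnm h1 h2
    obtain ⟨t, ht, heq⟩ := lam_ext Λ v hnm
    refine ((ini_comp ht h1 (by rw [← heq]; exact h2)).symm).trans ?_
    exact ini_congr heq.symm rfl
  rcases le_total n m with h | h
  · exact key n m h h1 h2
  · exact (key m n h h2 h1).symm
noncomputable def lamBd (Λ : KGraph k) (v : Λ.Obj) : Fin k → ℕ∞ :=
  fun i => ⨆ n, (Λ.deg (lam Λ v n) i : ℕ∞)

lemma lam_deg_le_bd (Λ : KGraph k) (v : Λ.Obj) (n : ℕ) (i : Fin k) :
    (Λ.deg (lam Λ v n) i : ℕ∞) ≤ lamBd Λ v i :=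
  le_iSup (fun n => ((Λ.deg (lam Λ v n) i : ℕ) : ℕ∞)) n

lemma lam_cofinal (Λ : KGraph k) (v : Λ.Obj) {q : Fin k → ℕ}
    (hq : ∀ i, (q i : ℕ∞) ≤ lamBd Λ v i) : ∃ n, q ≤ Λ.deg (lam Λ v n) := by
  have hex : ∀ i, ∃ n, q i ≤ Λ.deg (lam Λ v n) i := by
    intro i
    by_contra h
    push_neg at h
    have hq1 : 1 ≤ q i := by have := h 0; omega
    have hb : lamBd Λ v i ≤ ((q i - 1 : ℕ) : ℕ∞) := by
      refine iSup_le (fun n => ?_)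
      exact_mod_cast Nat.cast_le.mpr (Nat.le_pred_of_lt (h n))
    have h2 := (hq i).trans hb
    have h3 : q i ≤ q i - 1 := by exact_mod_cast h2
    omega
  choose nn hnn using hex
  refine ⟨Finset.univ.sup nn, fun i => ?_⟩
  exact (hnn i).trans (lam_le Λ v (Finset.le_sup (Finset.mem_univ i)) i)

lemma BPath.mk''_range (Λ : KGraph k) (bd : Fin k → ℕ∞)
    (F : ∀ q : Fin k → ℕ, (∀ i, (q i : ℕ∞) ≤ bd i) → Λ.Mor)
    (hdeg : ∀ q hq, Λ.deg (F q hq) = q)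
    (hcoh : ∀ q q' (hq : ∀ i, (q i : ℕ∞) ≤ bd i) (hq' : ∀ i, (q' i : ℕ∞) ≤ bd i)
      (hle : q ≤ q'), F q hq = ini (F q' hq') q (by rw [hdeg]; exact hle))
    (hbdry : ∀ p hp i, (p i : ℕ∞) = bd i →
      ¬∃ g : Λ.Mor, Λ.rng g = Λ.src (F p hp) ∧ Λ.deg g = unitVec i) :
    (BPath.mk'' Λ bd F hdeg hcoh hbdry).range = Λ.rng (F 0 (zero_le_bdeg bd)) := by
  rw [BPath.range_eq_mor_zero _ (zero_le_bdeg _)]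
  have hmm : (BPath.mk'' Λ bd F hdeg hcoh hbdry).mor 0 0 le_rfl (zero_le_bdeg bd)
      = sg (F 0 (zero_le_bdeg bd)) 0 0 le_rfl
        (le_of_eq (hdeg 0 (zero_le_bdeg bd)).symm) := rfl
  rw [hmm, rng_sg]
  exact congrArg Λ.rng (tl_zero _ _)

/-- A boundary path based at each vertex of a locally convex `k`-graph. -/
noncomputable def bpathAt (hlc : Λ.LocallyConvex) (v : Λ.Obj) : BPath Λ :=
  BPath.mk'' Λ (lamBd Λ v)
    (fun q hq => ini (lam Λ v (lam_cofinal Λ v hq).choose) q (lam_cofinal Λ v hq).choose_spec)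
    (fun q hq => deg_ini _ _ _)
    (fun q q' hq hq' hle => by
      have h1 := (lam_cofinal Λ v hq).choose_spec
      have h2 := (lam_cofinal Λ v hq').choose_spec
      refine (ini_lam_indep Λ v h1 (hle.trans h2)).trans ?_
      exact (ini_ini h2 hle (by rw [deg_ini]; exact hle)).symm)
    (fun p hp i hpi => by
      have hn₀ : p ≤ Λ.deg (lam Λ v (lam_cofinal Λ v hp).choose) :=
        (lam_cofinal Λ v hp).choose_spec
      set n₀ := (lam_cofinal Λ v hp).choose
      have hall : ∀ n, Λ.deg (lam Λ v n) i ≤ p i := by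
        intro n
        have h1 : (Λ.deg (lam Λ v n) i : ℕ∞) ≤ lamBd Λ v i := lam_deg_le_bd Λ v n i
        rw [← hpi] at h1
        exact_mod_cast h1
      have hex : ∃ M, n₀ ≤ M ∧ Λ.deg (nxt Λ (Λ.src (lam Λ v M))) i = 0 := by
        by_contra h
        push_neg at h
        have grow : ∀ t, Λ.deg (lam Λ v n₀) i + t ≤ Λ.deg (lam Λ v (n₀ + t)) i := by
          intro t
          induction t with
          | zero => simp
          | succ t ih =>
            have hμ : Λ.deg (nxt Λ (Λ.src (lam Λ v (n₀ + t)))) i ≠ 0 :=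
              h _ (Nat.le_add_right _ _)
            have hstep : Λ.deg (lam Λ v (n₀ + (t + 1))) i
                = Λ.deg (lam Λ v (n₀ + t)) i
                  + Λ.deg (nxt Λ (Λ.src (lam Λ v (n₀ + t)))) i := by
              show Λ.deg (Λ.comp _ _ _) i = _
              rw [Λ.deg_comp]
              rfl
            omega
        have h2 := grow (p i + 1)
        have h3 := hall (n₀ + (p i + 1))
        omega
      obtain ⟨M, hM1, hM2⟩ := hex
      have hdead := (nxt_spec Λ (Λ.src (lam Λ v M))).2.2 i hM2
      have hsrcL : Λ.src (lam Λ v (M + 1)) = Λ.src (nxt Λ (Λ.src (lam Λ v M))) := by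
        show Λ.src (Λ.comp _ _ _) = _
        rw [Λ.src_comp]
      have hpL : p ≤ Λ.deg (lam Λ v (M + 1)) := hn₀.trans (lam_le Λ v (by omega))
      have hdi : Λ.deg (tl (lam Λ v (M + 1)) p hpL) i = 0 := by
        rw [deg_tl]
        have h4 := hall (M + 1)
        have h5 : p i ≤ Λ.deg (lam Λ v (M + 1)) i := hpL i
        simp only [Pi.sub_apply]; omega
      have hdead2 : ¬∃ g, Λ.rng g = Λ.src (tl (lam Λ v (M + 1)) p hpL)
          ∧ Λ.deg g = unitVec i := by
        rw [src_tl, hsrcL]; exact hdead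
      have hdead3 := dead_prop hlc _ i hdi hdead2
      rintro ⟨g, hg1, hg2⟩
      refine hdead3 ⟨g, hg1.trans ?_, hg2⟩
      exact (congrArg Λ.src (ini_lam_indep Λ v hn₀ hpL)).trans (src_ini_eq_rng_tl _ _ _))

lemma bpathAt_range (hlc : Λ.LocallyConvex) (v : Λ.Obj) : (bpathAt hlc v).range = v := by
  refine (BPath.mk''_range Λ _ _ _ _ _).trans ?_
  rw [rng_ini, lam_rng]
lemma ext_sub_le {f : Λ.Mor} {z : BPath Λ} {q : Fin k → ℕ}
    (hq : ∀ i, (q i : ℕ∞) ≤ (Λ.deg f i : ℕ∞) + z.bdeg i) :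
    ∀ i, (((q - Λ.deg f) i : ℕ) : ℕ∞) ≤ z.bdeg i := by
  intro i
  have h := hq i
  set B := z.bdeg i with hB
  clear_value B
  induction B using ENat.recTopCoe with
  | top => exact le_top
  | coe n =>
    have h1 : q i ≤ Λ.deg f i + n := by exact_mod_cast h
    have h2 : (q - Λ.deg f) i ≤ n := by simp only [Pi.sub_apply]; omega
    exact_mod_cast h2

lemma ext_compat (f : Λ.Mor) (z : BPath Λ) (hsrc : Λ.src f = z.range) (c : Fin k → ℕ)
    (hc : ∀ i, (c i : ℕ∞) ≤ z.bdeg i) :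
    Λ.src f = Λ.rng (z.mor 0 c (zero_le) hc) := by
  rw [hsrc, BPath.range_eq_mor_zero z (zero_le_bdeg _)]
  exact (z.rng_mor 0 c (zero_le) hc (zero_le_bdeg _)).symm

/-- The long path `f · z(0, q - d(f))`. -/
noncomputable def extG (f : Λ.Mor) (z : BPath Λ) (hsrc : Λ.src f = z.range) (q : Fin k → ℕ)
    (hq : ∀ i, (q i : ℕ∞) ≤ (Λ.deg f i : ℕ∞) + z.bdeg i) : Λ.Mor :=
  Λ.comp f (z.mor 0 (q - Λ.deg f) (zero_le) (ext_sub_le hq))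
    (ext_compat f z hsrc _ (ext_sub_le hq))

lemma deg_extG (f : Λ.Mor) (z : BPath Λ) (hsrc : Λ.src f = z.range) (q : Fin k → ℕ)
    (hq : ∀ i, (q i : ℕ∞) ≤ (Λ.deg f i : ℕ∞) + z.bdeg i) :
    Λ.deg (extG f z hsrc q hq) = Λ.deg f + ((q - Λ.deg f) - 0) := by
  rw [extG, Λ.deg_comp, z.deg_mor]

lemma le_deg_extG (f : Λ.Mor) (z : BPath Λ) (hsrc : Λ.src f = z.range) (q : Fin k → ℕ)
    (hq : ∀ i, (q i : ℕ∞) ≤ (Λ.deg f i : ℕ∞) + z.bdeg i) :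
    q ≤ Λ.deg (extG f z hsrc q hq) := by
  rw [deg_extG]
  intro i
  simp only [Pi.add_apply, Pi.sub_apply, Pi.zero_apply]
  omega

lemma src_extG (f : Λ.Mor) (z : BPath Λ) (hsrc : Λ.src f = z.range) (q : Fin k → ℕ)
    (hq : ∀ i, (q i : ℕ∞) ≤ (Λ.deg f i : ℕ∞) + z.bdeg i) :
    Λ.src (extG f z hsrc q hq)
      = Λ.rng (z.mor (q - Λ.deg f) (q - Λ.deg f) le_rfl (ext_sub_le hq)) := by
  rw [extG, Λ.src_comp]
  exact z.src_mor 0 (q - Λ.deg f) (zero_le) (ext_sub_le hq)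

/-- The boundary path `f z` extending `z` by `f`. -/
noncomputable def extend (hlc : Λ.LocallyConvex) (f : Λ.Mor) (z : BPath Λ)
    (hsrc : Λ.src f = z.range) : BPath Λ :=
  BPath.mk'' Λ (fun i => (Λ.deg f i : ℕ∞) + z.bdeg i)
    (fun q hq => ini (extG f z hsrc q hq) q (le_deg_extG f z hsrc q hq))
    (fun q hq => deg_ini _ _ _)
    (fun q q' hq hq' hle => by
      have hcc : q - Λ.deg f ≤ q' - Λ.deg f := by
        intro i; simp only [Pi.sub_apply]
        exact Nat.sub_le_sub_right (hle i) _
      set v := z.mor (q - Λ.deg f) (q' - Λ.deg f) hcc (ext_sub_le hq') with hv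
      have hX : Λ.src (extG f z hsrc q hq) = Λ.rng v := by
        rw [src_extG]
        exact (z.rng_mor (q - Λ.deg f) (q' - Λ.deg f) hcc (ext_sub_le hq')
          (ext_sub_le hq)).symm
      have hsplit : extG f z hsrc q' hq' = Λ.comp (extG f z hsrc q hq) v hX := by
        have hz : z.mor 0 (q' - Λ.deg f) (zero_le) (ext_sub_le hq')
            = Λ.comp (z.mor 0 (q - Λ.deg f) (zero_le) (ext_sub_le hq)) v
              ((z.src_mor 0 (q - Λ.deg f) (zero_le) (ext_sub_le hq)).trans
                (z.rng_mor (q - Λ.deg f) (q' - Λ.deg f) hcc (ext_sub_le hq')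
                  (ext_sub_le hq)).symm) :=
          (z.comp_mor 0 (q - Λ.deg f) (q' - Λ.deg f) (zero_le) hcc (ext_sub_le hq')
            (ext_sub_le hq)).symm
        have hmid : Λ.src f = Λ.rng (Λ.comp (z.mor 0 (q - Λ.deg f) (zero_le)
            (ext_sub_le hq)) v ((z.src_mor 0 (q - Λ.deg f) (zero_le) (ext_sub_le hq)).trans
              (z.rng_mor (q - Λ.deg f) (q' - Λ.deg f) hcc (ext_sub_le hq')
                (ext_sub_le hq)).symm)) := by
          rw [Λ.rng_comp]
          exact ext_compat f z hsrc _ (ext_sub_le hq)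
        refine (comp_congr (h' := hmid) rfl hz).trans ?_
        exact (Λ.comp_assoc f (z.mor 0 (q - Λ.deg f) (zero_le) (ext_sub_le hq)) v
          (ext_compat f z hsrc _ (ext_sub_le hq)) _).symm
      have h3 : q ≤ Λ.deg (extG f z hsrc q' hq') := hle.trans (le_deg_extG f z hsrc q' hq')
      have h4 : q ≤ Λ.deg (Λ.comp (extG f z hsrc q hq) v hX) := by rw [← hsplit]; exact h3
      have e2 : ini (extG f z hsrc q' hq') q h3
          = ini (extG f z hsrc q hq) q (le_deg_extG f z hsrc q hq) := by
        refine (ini_congr (h' := h4) hsplit rfl).trans ?_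
        exact ini_comp hX (le_deg_extG f z hsrc q hq) h4
      exact e2.symm.trans (ini_ini (le_deg_extG f z hsrc q' hq') hle _).symm)
    (fun p hp i hpi => by
      have hpi2 : (p i : ℕ∞) = (Λ.deg f i : ℕ∞) + z.bdeg i := hpi
      have hzne : z.bdeg i ≠ ⊤ := by
        intro hT
        rw [hT, add_top] at hpi2
        exact (ENat.coe_ne_top _) hpi2
      have hzB : z.bdeg i = ((z.bdeg i).toNat : ℕ∞) := (ENat.coe_toNat hzne).symm
      have hpi' : p i = Λ.deg f i + (z.bdeg i).toNat := by
        rw [hzB] at hpi2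
        exact_mod_cast hpi2
      have hci : (((p - Λ.deg f) i : ℕ) : ℕ∞) = z.bdeg i := by
        rw [hzB]
        have : (p - Λ.deg f) i = (z.bdeg i).toNat := by
          simp only [Pi.sub_apply]; omega
        exact_mod_cast congrArg (fun t : ℕ => (t : ℕ∞)) this
      have hdeadz := z.boundary (p - Λ.deg f) (ext_sub_le hp) i hci
      have hdead1 : ¬∃ g, Λ.rng g = Λ.src (extG f z hsrc p hp) ∧ Λ.deg g = unitVec i := by
        rw [src_extG]
        exact hdeadz
      have hdi : Λ.deg (tl (extG f z hsrc p hp) p (le_deg_extG f z hsrc p hp)) i = 0 := by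
        rw [deg_tl, deg_extG]
        simp only [Pi.sub_apply, Pi.add_apply, Pi.zero_apply]
        omega
      have hdead2 : ¬∃ g, Λ.rng g = Λ.src (tl (extG f z hsrc p hp) p
          (le_deg_extG f z hsrc p hp)) ∧ Λ.deg g = unitVec i := by
        rw [src_tl]
        exact hdead1
      have hdead3 := dead_prop hlc _ i hdi hdead2
      rintro ⟨g, hg1, hg2⟩
      exact hdead3 ⟨g, hg1.trans (src_ini_eq_rng_tl _ _ _), hg2⟩)
lemma extend_isExtension (hlc : Λ.LocallyConvex) (f : Λ.Mor) (z : BPath Λ)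
    (hsrc : Λ.src f = z.range) : IsExtension f z (extend hlc f z hsrc) := by
  refine ⟨fun i => rfl, ?_, ?_⟩
  · intro h1 h2
    have hzz : z.mor 0 (Λ.deg f - Λ.deg f) (zero_le) (ext_sub_le h2)
        = z.mor 0 0 le_rfl (zero_le_bdeg _) :=
      z.mor_congr rfl (by funext i; simp only [Pi.sub_apply, Pi.zero_apply]; omega)
    have hdeg0 : Λ.deg (z.mor 0 (Λ.deg f - Λ.deg f) (zero_le) (ext_sub_le h2)) = 0 := by
      rw [z.deg_mor]; funext i; simp only [Pi.sub_apply, Pi.zero_apply]; omega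
    have hG : extG f z hsrc (Λ.deg f) h2 = f := comp_deg_zero_right _ hdeg0
    have hmm : (extend hlc f z hsrc).mor 0 (Λ.deg f) h1 h2
        = sg (ini (extG f z hsrc (Λ.deg f) h2) (Λ.deg f) (le_deg_extG f z hsrc _ h2)) 0
          (Λ.deg f) h1 (le_of_eq (deg_ini _ _ _).symm) := rfl
    rw [hmm]
    have hdf : Λ.deg f ≤ Λ.deg (extG f z hsrc (Λ.deg f) h2) := le_deg_extG f z hsrc _ h2
    refine (sg_ini hdf h1 _ (by rw [hG])).trans ?_
    refine (sg_congr (h1' := h1) (h2' := le_rfl) hG rfl rfl).trans ?_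
    exact sg_zero_deg f
  · intro p q hpq h2 h4
    have h4p : ∀ i, (p i : ℕ∞) ≤ z.bdeg i := fun i =>
      le_trans (Nat.cast_le.mpr (hpq i)) (h4 i)
    have hstepA : z.mor 0 ((Λ.deg f + q) - Λ.deg f) (zero_le) (ext_sub_le h2)
        = z.mor 0 q (zero_le) h4 :=
      z.mor_congr rfl (by funext i; simp only [Pi.sub_apply, Pi.add_apply]; omega)
    have hXq : Λ.src f = Λ.rng (z.mor 0 q (zero_le) h4) := ext_compat f z hsrc q h4
    have hG' : extG f z hsrc (Λ.deg f + q) h2 = Λ.comp f (z.mor 0 q (zero_le) h4) hXq :=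
      comp_congr rfl hstepA
    have hzdec : z.mor 0 q (zero_le) h4
        = Λ.comp (z.mor 0 p (zero_le) h4p) (z.mor p q hpq h4)
          ((z.src_mor 0 p (zero_le) h4p).trans (z.rng_mor p q hpq h4 h4p).symm) :=
      (z.comp_mor 0 p q (zero_le) hpq h4 h4p).symm
    have hmid2 : Λ.src f = Λ.rng (Λ.comp (z.mor 0 p (zero_le) h4p) (z.mor p q hpq h4)
        ((z.src_mor 0 p (zero_le) h4p).trans (z.rng_mor p q hpq h4 h4p).symm)) := by
      rw [Λ.rng_comp]
      exact ext_compat f z hsrc p h4p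
    have hY : Λ.src (Λ.comp f (z.mor 0 p (zero_le) h4p) (ext_compat f z hsrc p h4p))
        = Λ.rng (z.mor p q hpq h4) := by
      rw [Λ.src_comp]
      exact (z.src_mor 0 p (zero_le) h4p).trans (z.rng_mor p q hpq h4 h4p).symm
    have hA : extG f z hsrc (Λ.deg f + q) h2
        = Λ.comp (Λ.comp f (z.mor 0 p (zero_le) h4p) (ext_compat f z hsrc p h4p))
          (z.mor p q hpq h4) hY := by
      refine hG'.trans ?_
      refine (comp_congr (h' := hmid2) rfl hzdec).trans ?_
      exact (Λ.comp_assoc f (z.mor 0 p (zero_le) h4p) (z.mor p q hpq h4)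
        (ext_compat f z hsrc p h4p) _).symm
    have hdegA : Λ.deg (Λ.comp f (z.mor 0 p (zero_le) h4p) (ext_compat f z hsrc p h4p))
        = Λ.deg f + p := by
      rw [Λ.deg_comp, z.deg_mor]
      funext i
      simp only [Pi.add_apply, Pi.sub_apply, Pi.zero_apply]
      omega
    have hle1 : Λ.deg f + p ≤ Λ.deg (extG f z hsrc (Λ.deg f + q) h2) :=
      (add_le_add_right hpq (Λ.deg f)).trans (le_deg_extG f z hsrc _ h2)
    have htl : tl (extG f z hsrc (Λ.deg f + q) h2) (Λ.deg f + p) hle1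
        = z.mor p q hpq h4 :=
      ((ini_tl_unique hle1 hY hA.symm hdegA).2).symm
    have hmm : (extend hlc f z hsrc).mor (Λ.deg f + p) (Λ.deg f + q)
          (add_le_add_right hpq (Λ.deg f)) h2
        = sg (ini (extG f z hsrc (Λ.deg f + q) h2) (Λ.deg f + q)
            (le_deg_extG f z hsrc _ h2)) (Λ.deg f + p) (Λ.deg f + q)
          (add_le_add_right hpq (Λ.deg f)) (le_of_eq (deg_ini _ _ _).symm) := rfl
    rw [hmm]
    refine (sg_ini (le_deg_extG f z hsrc _ h2) (add_le_add_right hpq (Λ.deg f)) _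
      (le_deg_extG f z hsrc _ h2)).trans ?_
    have hunf : sg (extG f z hsrc (Λ.deg f + q) h2) (Λ.deg f + p) (Λ.deg f + q)
          (add_le_add_right hpq (Λ.deg f)) (le_deg_extG f z hsrc _ h2)
        = ini (tl (extG f z hsrc (Λ.deg f + q) h2) (Λ.deg f + p) hle1)
          ((Λ.deg f + q) - (Λ.deg f + p))
          (sub_le_deg_tl (le_deg_extG f z hsrc _ h2) (add_le_add_right hpq (Λ.deg f))) := rfl
    rw [hunf]
    have hdq : (Λ.deg f + q) - (Λ.deg f + p) = Λ.deg (z.mor p q hpq h4) := by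
      rw [z.deg_mor]
      funext i
      simp only [Pi.sub_apply, Pi.add_apply]
      omega
    refine (ini_congr (h' := le_of_eq rfl) htl hdq).trans ?_
    exact ini_deg_self _ le_rfl
lemma vmk_eq_iff {x y : BPath Λ} {m n : Fin k → ℕ} :
    vmk Λ x m = vmk Λ y n ↔ vkey Λ (x, m) = vkey Λ (y, n) :=
  ⟨fun h => Quotient.exact h, fun h => Quotient.sound h⟩

lemma pmk_eq_iff {x y : BPath Λ} {m n p q : Fin k → ℕ} {hmn : m ≤ n} {hpq : p ≤ q} :
    pmk Λ x m n hmn = pmk Λ y p q hpq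
      ↔ pkey Λ ⟨(x, (m, n)), hmn⟩ = pkey Λ ⟨(y, (p, q)), hpq⟩ :=
  ⟨fun h => Quotient.exact h, fun h => Quotient.sound h⟩

lemma pmk_congr {x : BPath Λ} {m n m' n' : Fin k → ℕ} {hmn : m ≤ n} {h' : m' ≤ n'}
    (hm : m = m') (hn : n = n') : pmk Λ x m n hmn = pmk Λ x m' n' h' := by
  subst hm; subst hn; rfl

lemma seg_eq_mor (x : BPath Λ) {m n : Fin k → ℕ} (hmn : m ≤ n)
    (hm : ∀ i, (m i : ℕ∞) ≤ x.bdeg i) (hn : ∀ i, (n i : ℕ∞) ≤ x.bdeg i) :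
    x.seg m n hmn = x.mor m n hmn hn :=
  x.mor_congr (minDeg_eq_self hm) (minDeg_eq_self hn)

lemma seg_idem (x : BPath Λ) {m n : Fin k → ℕ} (hmn : m ≤ n)
    (h' : minDeg m x.bdeg ≤ minDeg n x.bdeg) :
    x.seg (minDeg m x.bdeg) (minDeg n x.bdeg) h' = x.seg m n hmn :=
  x.mor_congr (minDeg_minDeg m x.bdeg) (minDeg_minDeg n x.bdeg)

lemma vtx_minDeg (x : BPath Λ) (m : Fin k → ℕ) : x.vtx (minDeg m x.bdeg) = x.vtx m := by
  unfold BPath.vtx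
  exact congrArg Λ.rng (x.mor_congr (minDeg_minDeg m x.bdeg) (minDeg_minDeg m x.bdeg))

lemma ext_le_bdeg {l : Λ.Mor} {x w : BPath Λ} (hE : IsExtension l x w) :
    ∀ i, ((Λ.deg l) i : ℕ∞) ≤ w.bdeg i := fun i => by
  rw [hE.1 i]; exact le_self_add

lemma ext_range {l : Λ.Mor} {x w : BPath Λ} (hE : IsExtension l x w) : w.range = Λ.rng l := by
  rw [BPath.range_eq_mor_zero w (zero_le_bdeg _)]
  rw [← w.rng_mor 0 (Λ.deg l) (zero_le) (ext_le_bdeg hE) (zero_le_bdeg _)]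
  exact congrArg Λ.rng (hE.2.1 (zero_le) (ext_le_bdeg hE))

lemma ext_vtx_deg {l : Λ.Mor} {x w : BPath Λ} (hE : IsExtension l x w) :
    w.vtx (Λ.deg l) = Λ.src l := by
  rw [w.vtx_eq_of_le (ext_le_bdeg hE),
    ← w.src_mor 0 (Λ.deg l) (zero_le) (ext_le_bdeg hE)]
  exact congrArg Λ.src (hE.2.1 (zero_le) (ext_le_bdeg hE))

lemma enat_le_sub_of_add_le {a b : ℕ} {c : ℕ∞} (h : (a : ℕ∞) + (b : ℕ∞) ≤ c) :
    (b : ℕ∞) ≤ c - (a : ℕ∞) := by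
  induction c using ENat.recTopCoe with
  | top => rw [ENat.top_sub_coe]; exact le_top
  | coe n =>
    have h1 : a + b ≤ n := by exact_mod_cast h
    rw [← ENat.coe_sub]
    have : b ≤ n - a := by omega
    exact_mod_cast this

lemma enat_cases (c : ℕ∞) : c = ⊤ ∨ ∃ a : ℕ, c = (a : ℕ∞) := by
  induction c using ENat.recTopCoe with
  | top => exact Or.inl rfl
  | coe a => exact Or.inr ⟨a, rfl⟩

lemma minDeg_top' {m : Fin k → ℕ} {d : Fin k → ℕ∞} {i : Fin k} (h : d i = ⊤) :
    minDeg m d i = m i := by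
  rw [minDeg, h, min_eq_left le_top, ENat.toNat_coe]

lemma minDeg_coe' {m : Fin k → ℕ} {d : Fin k → ℕ∞} {i : Fin k} {a : ℕ} (h : d i = (a : ℕ∞)) :
    minDeg m d i = min (m i) a := by
  rw [minDeg, h]
  rcases le_total (m i) a with hc | hc
  · rw [min_eq_left (by exact_mod_cast hc), ENat.toNat_coe, min_eq_left hc]
  · rw [min_eq_right (by exact_mod_cast hc), ENat.toNat_coe, min_eq_right hc]

lemma minDeg_glue_left {x y : BPath Λ} {m n p : Fin k → ℕ} (hmn : m ≤ n)
    (hkey : (fun i => n i - minDeg n x.bdeg i) = fun i => p i - minDeg p y.bdeg i)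
    {W : Fin k → ℕ∞}
    (hW : ∀ i, W i = ((minDeg n x.bdeg i : ℕ) : ℕ∞)
      + (y.bdeg i - ((minDeg p y.bdeg i : ℕ) : ℕ∞))) :
    minDeg m W = minDeg m x.bdeg := by
  funext i
  have hk : n i - minDeg n x.bdeg i = p i - minDeg p y.bdeg i := congrFun hkey i
  have hm : m i ≤ n i := hmn i
  rcases enat_cases (x.bdeg i) with hA | ⟨a, hA⟩ <;> rcases enat_cases (y.bdeg i) with hB | ⟨b, hB⟩
  · have hWi : W i = ⊤ := by rw [hW i, hB, ENat.top_sub_coe, add_top]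
    rw [minDeg_top' hWi, minDeg_top' hA]
  · have hn1 : minDeg n x.bdeg i = n i := minDeg_top' hA
    have hp1 : minDeg p y.bdeg i = min (p i) b := minDeg_coe' hB
    have hWi : W i = ((n i + (b - min (p i) b) : ℕ) : ℕ∞) := by
      rw [hW i, hB, hn1, hp1, ← ENat.coe_sub, ← Nat.cast_add]
    rw [minDeg_coe' hWi, minDeg_top' hA]
    rw [hn1, hp1] at hk
    omega
  · have hn1 : minDeg n x.bdeg i = min (n i) a := minDeg_coe' hA
    have hp1 : minDeg p y.bdeg i = p i := minDeg_top' hB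
    have hWi : W i = ⊤ := by rw [hW i, hB, ENat.top_sub_coe, add_top]
    rw [minDeg_top' hWi, minDeg_coe' hA]
    rw [hn1, hp1] at hk
    omega
  · have hn1 : minDeg n x.bdeg i = min (n i) a := minDeg_coe' hA
    have hp1 : minDeg p y.bdeg i = min (p i) b := minDeg_coe' hB
    have hWi : W i = ((min (n i) a + (b - min (p i) b) : ℕ) : ℕ∞) := by
      rw [hW i, hB, hn1, hp1, ← ENat.coe_sub, ← Nat.cast_add]
    rw [minDeg_coe' hWi, minDeg_coe' hA]
    rw [hn1, hp1] at hk
    omega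

lemma minDeg_glue_right {x y : BPath Λ} {n p q : Fin k → ℕ} (hpq : p ≤ q)
    (hkey : (fun i => n i - minDeg n x.bdeg i) = fun i => p i - minDeg p y.bdeg i)
    {W : Fin k → ℕ∞}
    (hW : ∀ i, W i = ((minDeg n x.bdeg i : ℕ) : ℕ∞)
      + (y.bdeg i - ((minDeg p y.bdeg i : ℕ) : ℕ∞))) :
    minDeg (n + (q - p)) W = minDeg n x.bdeg + (minDeg q y.bdeg - minDeg p y.bdeg) := by
  funext i
  have hk : n i - minDeg n x.bdeg i = p i - minDeg p y.bdeg i := congrFun hkey i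
  have hp : p i ≤ q i := hpq i
  have hgoalrw : (minDeg n x.bdeg + (minDeg q y.bdeg - minDeg p y.bdeg)) i
      = minDeg n x.bdeg i + (minDeg q y.bdeg i - minDeg p y.bdeg i) := rfl
  rw [hgoalrw]
  have harg : (n + (q - p)) i = n i + (q i - p i) := rfl
  rcases enat_cases (x.bdeg i) with hA | ⟨a, hA⟩ <;> rcases enat_cases (y.bdeg i) with hB | ⟨b, hB⟩
  · have hWi : W i = ⊤ := by rw [hW i, hB, ENat.top_sub_coe, add_top]
    rw [minDeg_top' hWi, minDeg_top' hA, minDeg_top' hB, minDeg_top' hB, harg]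
  · have hn1 : minDeg n x.bdeg i = n i := minDeg_top' hA
    have hp1 : minDeg p y.bdeg i = min (p i) b := minDeg_coe' hB
    have hq1 : minDeg q y.bdeg i = min (q i) b := minDeg_coe' hB
    have hWi : W i = ((n i + (b - min (p i) b) : ℕ) : ℕ∞) := by
      rw [hW i, hB, hn1, hp1, ← ENat.coe_sub, ← Nat.cast_add]
    rw [minDeg_coe' hWi, hn1, hp1, hq1, harg]
    rw [hn1, hp1] at hk
    omega
  · have hn1 : minDeg n x.bdeg i = min (n i) a := minDeg_coe' hA
    have hp1 : minDeg p y.bdeg i = p i := minDeg_top' hB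
    have hq1 : minDeg q y.bdeg i = q i := minDeg_top' hB
    have hWi : W i = ⊤ := by rw [hW i, hB, ENat.top_sub_coe, add_top]
    rw [minDeg_top' hWi, hn1, hp1, hq1, harg]
    rw [hn1, hp1] at hk
    omega
  · have hn1 : minDeg n x.bdeg i = min (n i) a := minDeg_coe' hA
    have hp1 : minDeg p y.bdeg i = min (p i) b := minDeg_coe' hB
    have hq1 : minDeg q y.bdeg i = min (q i) b := minDeg_coe' hB
    have hWi : W i = ((min (n i) a + (b - min (p i) b) : ℕ) : ℕ∞) := by
      rw [hW i, hB, hn1, hp1, ← ENat.coe_sub, ← Nat.cast_add]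
    rw [minDeg_coe' hWi, hn1, hp1, hq1, harg]
    rw [hn1, hp1] at hk
    omega

lemma iota_pkey {l : Λ.Mor} {x w : BPath Λ} (hE : IsExtension l x w)
    {hz : (0 : Fin k → ℕ) ≤ Λ.deg l} :
    pkey Λ ⟨(w, (0, Λ.deg l)), hz⟩ = (l, (0, Λ.deg l)) := by
  show (w.seg 0 (Λ.deg l) hz,
      ((fun i => (0 : Fin k → ℕ) i - minDeg 0 w.bdeg i : Fin k → ℕ),
       (fun i => Λ.deg l i - (0 : Fin k → ℕ) i : Fin k → ℕ))) = _
  refine Prod.ext_iff.mpr ⟨?_, Prod.ext_iff.mpr ⟨?_, ?_⟩⟩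
  · exact (seg_eq_mor w hz (zero_le_bdeg _) (ext_le_bdeg hE)).trans
      (hE.2.1 hz (ext_le_bdeg hE))
  · funext i; simp
  · funext i; simp

lemma pkey_minDeg (x : BPath Λ) {m n : Fin k → ℕ} (hmn : m ≤ n) :
    pkey Λ ⟨(x, (minDeg m x.bdeg, minDeg n x.bdeg)), minDeg_mono hmn x.bdeg⟩
      = (x.seg m n hmn, (0, fun i => minDeg n x.bdeg i - minDeg m x.bdeg i)) := by
  show (x.seg (minDeg m x.bdeg) (minDeg n x.bdeg) (minDeg_mono hmn x.bdeg),
      ((fun i => minDeg m x.bdeg i - minDeg (minDeg m x.bdeg) x.bdeg i : Fin k → ℕ),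
       (fun i => minDeg n x.bdeg i - minDeg m x.bdeg i : Fin k → ℕ))) = _
  refine Prod.ext_iff.mpr ⟨?_, Prod.ext_iff.mpr ⟨?_, rfl⟩⟩
  · exact seg_idem x hmn (minDeg_mono hmn x.bdeg)
  · funext i; rw [minDeg_minDeg]; simp

lemma deg_seg_eq (x : BPath Λ) {m n : Fin k → ℕ} (hmn : m ≤ n) :
    Λ.deg (x.seg m n hmn) = fun i => minDeg n x.bdeg i - minDeg m x.bdeg i := by
  have h := x.deg_mor (minDeg m x.bdeg) (minDeg n x.bdeg) (minDeg_mono hmn x.bdeg)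
    (fun i => minDeg_le_deg n x.bdeg i)
  exact h.trans (funext fun i => rfl)

/-- The canonical witness for `ι`. -/
lemma iota_mk {Λt : KGraph k} (hlc : Λ.LocallyConvex) (D : Desourcification Λ Λt)
    (l : Λ.Mor) :
    IotaRel D l (D.eMor (pmk Λ
      (extend hlc l (bpathAt hlc (Λ.src l)) (bpathAt_range hlc (Λ.src l)).symm)
      0 (Λ.deg l) (fun i => Nat.zero_le _))) :=
  ⟨bpathAt hlc (Λ.src l), _, bpathAt_range hlc _,
    extend_isExtension hlc l _ (bpathAt_range hlc (Λ.src l)).symm, rfl⟩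

end KGraph
open KGraph

/-- **Remark 4.1.** Let `Λ` be a row-finite locally convex `k`-graph and `Λ̃` its
desourcification.  The assignment `ι(l) = [l x; (0, d(l))]` (for any
`x ∈ s(l)Λ^{≤∞}`) is a well-defined injective degree-preserving functor
`ι : Λ → Λ̃`, and `π([x; (m, n)]) = [x; (m ∧ d(x), n ∧ d(x))]` is a well-defined
surjective `k`-graph morphism `π : Λ̃ → ι(Λ)` with `π ∘ π = π` and `π ∘ ι = ι`. -/
theorem desourcification_iota_pi_properties
    {k : ℕ} (Λ Λt : KGraph k) (hrf : Λ.RowFinite) (hlc : Λ.LocallyConvex)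
    (D : KGraph.Desourcification Λ Λt) :
    -- ι is a well-defined (total) map
    (∀ l : Λ.Mor, ∃ a : Λt.Mor, KGraph.IotaRel D l a) ∧
    (∀ l a a', KGraph.IotaRel D l a → KGraph.IotaRel D l a' → a = a') ∧
    -- ι is injective
    (∀ l l' a, KGraph.IotaRel D l a → KGraph.IotaRel D l' a → l = l') ∧
    -- ι is degree-preserving
    (∀ l a, KGraph.IotaRel D l a → Λt.deg a = Λ.deg l) ∧
    -- ι is a functor: it preserves identities and composition
    (∀ v a, KGraph.IotaRel D (Λ.id v) a → ∃ u, a = Λt.id u) ∧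
    (∀ l l' a a' (h : Λ.src l = Λ.rng l'),
      KGraph.IotaRel D l a → KGraph.IotaRel D l' a' →
      ∃ h' : Λt.src a = Λt.rng a',
        KGraph.IotaRel D (Λ.comp l l' h) (Λt.comp a a' h')) ∧
    -- π is a well-defined (total) map
    (∀ a : Λt.Mor, ∃ b, KGraph.PiRel D a b) ∧
    (∀ a b b', KGraph.PiRel D a b → KGraph.PiRel D a b' → b = b') ∧
    -- π maps into ι(Λ), and π ∘ ι = ι (hence π is surjective onto ι(Λ))
    (∀ a b, KGraph.PiRel D a b → ∃ l, KGraph.IotaRel D l b) ∧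
    (∀ l a, KGraph.IotaRel D l a → KGraph.PiRel D a a) ∧
    -- π ∘ π = π
    (∀ a b, KGraph.PiRel D a b → KGraph.PiRel D b b) ∧
    -- π is a k-graph morphism: compatible with range, source, identities, composition
    (∀ a b, KGraph.PiRel D a b →
      KGraph.PiVRel D (Λt.rng a) (Λt.rng b) ∧ KGraph.PiVRel D (Λt.src a) (Λt.src b)) ∧
    (∀ u b, KGraph.PiRel D (Λt.id u) b → ∃ u', b = Λt.id u') ∧
    (∀ a a' b b' (h : Λt.src a = Λt.rng a'),
      KGraph.PiRel D a b → KGraph.PiRel D a' b' →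
      ∃ h' : Λt.src b = Λt.rng b',
        KGraph.PiRel D (Λt.comp a a' h) (Λt.comp b b' h')) := by
  classical
  refine ⟨?_, ?_, ?_, ?_, ?_, ?_, ?_, ?_, ?_, ?_, ?_, ?_, ?_, ?_⟩
  -- 1. ι total
  · intro l
    exact ⟨_, iota_mk hlc D l⟩
  -- 2. ι well-defined
  · rintro l a a' ⟨x, w, hx, hE, ha⟩ ⟨x', w', hx', hE', ha'⟩
    rw [ha, ha']
    exact congrArg D.eMor (pmk_eq_iff.mpr ((iota_pkey hE).trans (iota_pkey hE').symm))
  -- 3. ι injective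
  · rintro l l' a ⟨x, w, hx, hE, ha⟩ ⟨x', w', hx', hE', ha'⟩
    have hkey := pmk_eq_iff.mp (D.eMor.injective (ha.symm.trans ha'))
    have := (iota_pkey hE (hz := fun i => Nat.zero_le _)).symm.trans
      (hkey.trans (iota_pkey hE' (hz := fun i => Nat.zero_le _)))
    exact congrArg Prod.fst this
  -- 4. ι degree-preserving
  · rintro l a ⟨x, w, hx, hE, ha⟩
    rw [ha, D.deg_eq]
    funext i
    simp
  -- 5. ι preserves identities
  · rintro v a ⟨x, w, hx, hE, ha⟩
    refine ⟨D.eObj (vmk Λ w 0), ?_⟩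
    rw [ha, pmk_congr (h' := le_rfl) rfl (Λ.deg_id v), ← D.id_eq]
  -- 6. ι is multiplicative
  · rintro l l' a a' h ⟨x, w, hx, hE, haa⟩ ⟨x', w', hx', hE', haa'⟩
    subst haa; subst haa'
    have hwr : w'.range = Λ.rng l' := ext_range hE'
    have hsrc2 : Λ.src l = w'.range := by rw [hwr, h]
    have hdl_le := ext_le_bdeg hE
    have hvkey : vmk Λ w (Λ.deg l) = vmk Λ w' 0 := by
      rw [vmk_eq_iff]
      refine Prod.ext_iff.mpr ⟨?_, ?_⟩
      · show w.vtx (Λ.deg l) = w'.vtx 0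
        rw [ext_vtx_deg hE, h]
        exact hwr.symm
      · show (fun i => Λ.deg l i - minDeg (Λ.deg l) w.bdeg i)
          = fun i => (0 : Fin k → ℕ) i - minDeg 0 w'.bdeg i
        funext i
        rw [minDeg_eq_self hdl_le]
        simp
    have h' : Λt.src (D.eMor (pmk Λ w 0 (Λ.deg l) fun i => Nat.zero_le _))
        = Λt.rng (D.eMor (pmk Λ w' 0 (Λ.deg l') fun i => Nat.zero_le _)) := by
      rw [D.src_eq, D.rng_eq, hvkey]
    refine ⟨h', ?_⟩
    have hEW : IsExtension l w' (extend hlc l w' hsrc2) := extend_isExtension hlc l w' hsrc2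
    set W := extend hlc l w' hsrc2 with hWdef
    have hglue : IsGluing w (minDeg (Λ.deg l) w.bdeg) w' (minDeg 0 w'.bdeg) W := by
      rw [minDeg_eq_self hdl_le, minDeg_zero]
      refine ⟨?_, ?_, ?_⟩
      · intro i
        rw [hEW.1 i]
        simp
      · intro h1 h2 h3
        exact (hEW.2.1 h1 h2).trans (hE.2.1 h1 h3).symm
      · intro p q hpq h2 h4
        have h4' : ∀ i, (q i : ℕ∞) ≤ w'.bdeg i := fun i => by
          have hq := h4 i
          rwa [show ((0 : Fin k → ℕ) + q) i = q i by simp] at hq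
        exact (hEW.2.2 p q hpq h2 h4').trans
          (w'.mor_congr (by simp) (by simp))
    have hEXT : IsExtension (Λ.comp l l' h) x' W := by
      refine ⟨?_, ?_, ?_⟩
      · intro i
        rw [hEW.1 i, hE'.1 i, Λ.deg_comp]
        show (Λ.deg l i : ℕ∞) + ((Λ.deg l' i : ℕ∞) + x'.bdeg i)
          = (((Λ.deg l + Λ.deg l') i : ℕ) : ℕ∞) + x'.bdeg i
        rw [show ((Λ.deg l + Λ.deg l') i : ℕ) = Λ.deg l i + Λ.deg l' i from rfl,
          Nat.cast_add, add_assoc]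
      · intro h1 h2
        have hd : Λ.deg (Λ.comp l l' h) = Λ.deg l + Λ.deg l' := Λ.deg_comp l l' h
        have h2' : ∀ i, (((Λ.deg l + Λ.deg l') i : ℕ) : ℕ∞) ≤ W.bdeg i := fun i => by
          have := h2 i
          rwa [hd] at this
        have hWdl : ∀ i, ((Λ.deg l i : ℕ)  : ℕ∞) ≤ W.bdeg i := ext_le_bdeg hEW
        have hsplit : W.mor 0 (Λ.deg l + Λ.deg l') (zero_le) h2'
            = Λ.comp (W.mor 0 (Λ.deg l) (zero_le) hWdl)
              (W.mor (Λ.deg l) (Λ.deg l + Λ.deg l') le_self_add h2')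
              ((W.src_mor 0 (Λ.deg l) (zero_le) hWdl).trans
                (W.rng_mor (Λ.deg l) (Λ.deg l + Λ.deg l') le_self_add h2' hWdl).symm) :=
          (W.comp_mor 0 (Λ.deg l) (Λ.deg l + Λ.deg l') (zero_le) le_self_add h2'
            hWdl).symm
        have hWd' : ∀ i, (((Λ.deg l' : Fin k → ℕ) i : ℕ) : ℕ∞) ≤ w'.bdeg i := ext_le_bdeg hE'
        have hpart2 : W.mor (Λ.deg l) (Λ.deg l + Λ.deg l') le_self_add h2' = l' := by
          refine (W.mor_congr (h1' := add_le_add_right (zero_le) _) (h2' := h2')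
            (add_zero (Λ.deg l)).symm rfl).trans ?_
          exact (hEW.2.2 0 (Λ.deg l') (zero_le) h2' hWd').trans (hE'.2.1 (zero_le) hWd')
        refine (W.mor_congr (h1' := zero_le) (h2' := h2') rfl hd).trans ?_
        refine hsplit.trans ?_
        refine (comp_congr (h' := h) (hEW.2.1 (zero_le) hWdl) hpart2).trans rfl
      · intro p q hpq h2 h4
        have hd : Λ.deg (Λ.comp l l' h) = Λ.deg l + Λ.deg l' := Λ.deg_comp l l' h
        have harr : ∀ r : Fin k → ℕ, Λ.deg (Λ.comp l l' h) + r = Λ.deg l + (Λ.deg l' + r) := by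
          intro r
          rw [hd, add_assoc]
        have hww : ∀ i, (((Λ.deg l' + q) i : ℕ) : ℕ∞) ≤ w'.bdeg i := fun i => by
          have hh := h2 i
          rw [hEW.1 i] at hh
          have he : ((Λ.deg (Λ.comp l l' h) + q) i : ℕ∞)
              = (Λ.deg l i : ℕ∞) + (((Λ.deg l' + q) i : ℕ) : ℕ∞) := by
            rw [show ((Λ.deg (Λ.comp l l' h) + q) i : ℕ) = Λ.deg (Λ.comp l l' h) i + q i
              from rfl, hd]
            show (((Λ.deg l i + Λ.deg l' i) + q i : ℕ) : ℕ∞) = _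
            rw [show ((Λ.deg l' + q) i : ℕ) = Λ.deg l' i + q i from rfl]
            push_cast
            ring
          rw [he] at hh
          exact (WithTop.add_le_add_iff_left (WithTop.coe_ne_top (a := Λ.deg l i))).mp hh
        have h2q : ∀ i, (((Λ.deg l + (Λ.deg l' + q)) i : ℕ) : ℕ∞) ≤ W.bdeg i := fun i => by
          have hh := h2 i
          rwa [harr q] at hh
        refine (W.mor_congr (h1' := add_le_add_right (add_le_add_right hpq _) _) (h2' := h2q)
          (harr p) (harr q)).trans ?_
        exact (hEW.2.2 (Λ.deg l' + p) (Λ.deg l' + q) (add_le_add_right hpq _) h2q hww).trans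
          (hE'.2.2 p q hpq hww h4)
    refine ⟨x', W, by rw [Λ.src_comp]; exact hx', hEXT, ?_⟩
    refine (D.comp_eq w 0 (Λ.deg l) (fun i => Nat.zero_le _) w' 0 (Λ.deg l')
      (fun i => Nat.zero_le _) h' W hglue).trans ?_
    refine congrArg D.eMor (pmk_congr rfl ?_)
    rw [Λ.deg_comp]
    funext i
    show Λ.deg l i + (Λ.deg l' i - (0 : Fin k → ℕ) i) = Λ.deg l i + Λ.deg l' i
    simp
  -- 7. π total
  · intro a
    obtain ⟨s, hs⟩ := Quotient.exists_rep (D.eMor.symm a)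
    obtain ⟨⟨x, m, n⟩, hmn⟩ := s
    exact ⟨_, x, m, n, hmn,
      ((congrArg D.eMor hs).trans (D.eMor.apply_symm_apply a)).symm, rfl⟩
  -- 8. π well-defined
  · rintro a b b' ⟨x, m, n, hmn, ha, hb⟩ ⟨x', m', n', hmn', ha', hb'⟩
    rw [hb, hb']
    apply congrArg D.eMor
    rw [pmk_eq_iff]
    have hkey : pkey Λ ⟨(x, (m, n)), hmn⟩ = pkey Λ ⟨(x', (m', n')), hmn'⟩ :=
      pmk_eq_iff.mp (D.eMor.injective (ha.symm.trans ha'))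
    have h1k : x.seg m n hmn = x'.seg m' n' hmn' := congrArg Prod.fst hkey
    rw [pkey_minDeg x hmn, pkey_minDeg x' hmn']
    refine Prod.ext_iff.mpr ⟨h1k, Prod.ext_iff.mpr ⟨rfl, ?_⟩⟩
    exact (deg_seg_eq x hmn).symm.trans ((congrArg Λ.deg h1k).trans (deg_seg_eq x' hmn'))
  -- 9. π maps into ι(Λ)
  · rintro a b ⟨x, m, n, hmn, ha, hb⟩
    refine ⟨x.seg m n hmn, ?_⟩
    have hsx : Λ.src (x.seg m n hmn)
        = (x.shift (minDeg n x.bdeg) (minDeg_le_deg n x.bdeg)).range := by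
      rw [BPath.shift_range]
      refine (x.src_mor (minDeg m x.bdeg) (minDeg n x.bdeg) (minDeg_mono hmn x.bdeg)
        (fun i => minDeg_le_deg n x.bdeg i)).trans ?_
      exact (x.vtx_eq_of_le (minDeg_le_deg n x.bdeg)).symm
    refine ⟨x.shift (minDeg n x.bdeg) (minDeg_le_deg n x.bdeg),
      extend hlc _ _ hsx, hsx.symm, extend_isExtension hlc _ _ hsx, ?_⟩
    rw [hb]
    apply congrArg D.eMor
    rw [pmk_eq_iff, pkey_minDeg x hmn, iota_pkey (extend_isExtension hlc _ _ hsx)]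
    exact Prod.ext_iff.mpr ⟨rfl, Prod.ext_iff.mpr ⟨rfl, (deg_seg_eq x hmn).symm⟩⟩
  -- 10. π ∘ ι = ι
  · rintro l a ⟨x, w, hx, hE, ha⟩
    refine ⟨w, 0, Λ.deg l, zero_le, ha, ?_⟩
    rw [ha]
    exact congrArg D.eMor (pmk_congr (minDeg_zero w.bdeg).symm
      (minDeg_eq_self (ext_le_bdeg hE)).symm)
  -- 11. π ∘ π = π
  · rintro a b ⟨x, m, n, hmn, ha, hb⟩
    refine ⟨x, minDeg m x.bdeg, minDeg n x.bdeg, minDeg_mono hmn x.bdeg, hb, ?_⟩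
    rw [hb]
    exact congrArg D.eMor (pmk_congr (minDeg_minDeg m x.bdeg).symm
      (minDeg_minDeg n x.bdeg).symm)
  -- 12. π compatible with rng and src
  · rintro a b ⟨x, m, n, hmn, ha, hb⟩
    constructor
    · exact ⟨x, m, by rw [ha, D.rng_eq], by rw [hb, D.rng_eq]⟩
    · exact ⟨x, n, by rw [ha, D.src_eq], by rw [hb, D.src_eq]⟩
  -- 13. π preserves identities
  · rintro u b ⟨x, m, n, hmn, ha, hb⟩
    have hdeg0 : n - m = 0 := by
      have h1 := D.deg_eq x m n hmn
      rw [← ha, Λt.deg_id] at h1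
      exact h1.symm
    have hnm : n = m := by
      funext i
      have h2 := congrFun hdeg0 i
      have h3 : m i ≤ n i := hmn i
      simp only [Pi.sub_apply, Pi.zero_apply] at h2
      omega
    subst hnm
    refine ⟨D.eObj (vmk Λ x (minDeg n x.bdeg)), ?_⟩
    rw [hb]
    exact (D.id_eq x (minDeg n x.bdeg)).symm
  -- 14. π is multiplicative
  · rintro a a' b b' h ⟨x, m, n, hmn, ha, hb⟩ ⟨y, p, q, hpq, ha', hb'⟩
    subst ha; subst ha'; subst hb; subst hb'
    have hvk : vkey Λ (x, n) = vkey Λ (y, p) :=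
      vmk_eq_iff.mp (D.eObj.injective
        ((D.src_eq x m n hmn).symm.trans (h.trans (D.rng_eq y p q hpq))))
    have hvtx : x.vtx n = y.vtx p := congrArg Prod.fst hvk
    have hkey : (fun i => n i - minDeg n x.bdeg i) = fun i => p i - minDeg p y.bdeg i :=
      congrArg Prod.snd hvk
    set f := x.mor 0 (minDeg n x.bdeg) (zero_le) (fun i => minDeg_le_deg n x.bdeg i)
      with hf
    have hsg : Λ.src f = (y.shift (minDeg p y.bdeg) (minDeg_le_deg p y.bdeg)).range := by
      rw [BPath.shift_range]
      refine (x.src_mor 0 (minDeg n x.bdeg) (zero_le)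
        (fun i => minDeg_le_deg n x.bdeg i)).trans ?_
      refine ((x.vtx_eq_of_le (minDeg_le_deg n x.bdeg)).symm).trans ?_
      rw [vtx_minDeg x n, hvtx, ← vtx_minDeg y p]
    set W := extend hlc f _ hsg with hW
    have hEW : IsExtension f (y.shift (minDeg p y.bdeg) (minDeg_le_deg p y.bdeg)) W :=
      extend_isExtension hlc f _ hsg
    have hd : Λ.deg f = minDeg n x.bdeg := by
      rw [hf, x.deg_mor]
      funext i
      simp
    have hWbd : ∀ i, W.bdeg i = ((minDeg n x.bdeg i : ℕ) : ℕ∞)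
        + (y.bdeg i - ((minDeg p y.bdeg i : ℕ) : ℕ∞)) := fun i => by
      rw [hEW.1 i, hd]
      rfl
    have hglue : IsGluing x (minDeg n x.bdeg) y (minDeg p y.bdeg) W := by
      refine ⟨hWbd, ?_, ?_⟩
      · intro h1 h2 h3
        refine (W.mor_congr (h1' := zero_le) (h2' := ext_le_bdeg hEW) rfl hd.symm).trans ?_
        exact hEW.2.1 (zero_le) (ext_le_bdeg hEW)
      · intro p' q' hpq' h2 h4
        have h4s : ∀ i, ((q' i : ℕ) : ℕ∞)
            ≤ (y.shift (minDeg p y.bdeg) (minDeg_le_deg p y.bdeg)).bdeg i := fun i => by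
          have hh0 := h4 i
          rw [show (((minDeg p y.bdeg + q') i : ℕ) : ℕ∞)
            = ((minDeg p y.bdeg i : ℕ) : ℕ∞) + ((q' i : ℕ) : ℕ∞) by
              rw [show ((minDeg p y.bdeg + q') i : ℕ)
                = minDeg p y.bdeg i + q' i from rfl, Nat.cast_add]] at hh0
          exact enat_le_sub_of_add_le hh0
        have h2' : ∀ i, (((Λ.deg f + q') i : ℕ) : ℕ∞) ≤ W.bdeg i := fun i => by
          have hh := h2 i
          rwa [show minDeg n x.bdeg + q' = Λ.deg f + q' by rw [hd]] at hh
        refine (W.mor_congr (h1' := add_le_add_right hpq' _) (h2' := h2')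
          (by rw [hd]) (by rw [hd])).trans ?_
        exact hEW.2.2 p' q' hpq' h2' h4s
    have hvk2 : vmk Λ x (minDeg n x.bdeg) = vmk Λ y (minDeg p y.bdeg) := by
      rw [vmk_eq_iff]
      refine Prod.ext_iff.mpr ⟨?_, ?_⟩
      · show x.vtx (minDeg n x.bdeg) = y.vtx (minDeg p y.bdeg)
        rw [vtx_minDeg, vtx_minDeg, hvtx]
      · show (fun i => minDeg n x.bdeg i - minDeg (minDeg n x.bdeg) x.bdeg i)
            = fun i => minDeg p y.bdeg i - minDeg (minDeg p y.bdeg) y.bdeg i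
        funext i
        rw [minDeg_minDeg, minDeg_minDeg]
        simp
    have h2 : Λt.src (D.eMor (pmk Λ x (minDeg m x.bdeg) (minDeg n x.bdeg)
          (minDeg_mono hmn x.bdeg)))
        = Λt.rng (D.eMor (pmk Λ y (minDeg p y.bdeg) (minDeg q y.bdeg)
          (minDeg_mono hpq y.bdeg))) := by
      rw [D.src_eq, D.rng_eq, hvk2]
    refine ⟨h2, ?_⟩
    have hglue2 : IsGluing x (minDeg (minDeg n x.bdeg) x.bdeg)
        y (minDeg (minDeg p y.bdeg) y.bdeg) W := by
      rw [minDeg_minDeg, minDeg_minDeg]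
      exact hglue
    refine ⟨W, m, n + (q - p), hmn.trans le_self_add,
      D.comp_eq x m n hmn y p q hpq h W hglue, ?_⟩
    refine (D.comp_eq x (minDeg m x.bdeg) (minDeg n x.bdeg) (minDeg_mono hmn x.bdeg) y
      (minDeg p y.bdeg) (minDeg q y.bdeg) (minDeg_mono hpq y.bdeg) h2 W hglue2).trans ?_
    apply congrArg D.eMor
    exact pmk_congr (minDeg_glue_left hmn hkey hWbd).symm
      (minDeg_glue_right hpq hkey hWbd).symm
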